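/- arXiv:1209.3381 — 7 statements merged into one kernel-verified Lean document; each statement's English description precedes it below -/
import Mathlib

section
/- For every ω ∈ Ω there exists a nontrivial entire positive orbit of the cocycle generated by T, i.e. a map v : ℤ → K ∖ {0} such that v(n+1) = T(θⁿω) v(n) for every n ∈ ℤ (θⁿ denoting the n-th iterate of θ, with θ⁻¹ its inverse for negative n). -/
open MeasureTheory

/-- Existence of a nontrivial entire positive orbit for a positive
random cocycle of bounded linear operators on a finite-dimensional space. -/
theorem stmt_0
    {E : Type*} [NormedAddCommGroup E] [NormedSpace ℝ E] [FiniteDimensional ℝ E] [MeasurableSpace E] [BorelSpace E]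
    (hdim : 2 ≤ Module.finrank ℝ E)
    (K : Set E) (hKclosed : IsClosed K) (hKconvex : Convex ℝ K)
    (hKcone : ∀ α : ℝ, 0 ≤ α → ∀ u ∈ K, α • u ∈ K)
    (hKpointed : K ∩ (-K) = {0}) (hKnontrivial : K ≠ {0})
    {Ω : Type*} [MeasurableSpace Ω] (ℙ : Measure Ω) [IsProbabilityMeasure ℙ]
    (θ : Equiv.Perm Ω) (hθmeas : Measurable θ) (hθinvmeas : Measurable θ.symm)
    (hθmp : MeasurePreserving θ ℙ ℙ) (hθerg : Ergodic (θ : Ω → Ω) ℙ)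
    (T : Ω → E →L[ℝ] E)
    (hTmeas : ∀ u : E, Measurable fun ω => T ω u)
    (hTint : Integrable (fun ω => max (Real.log ‖T ω‖) 0) ℙ)
    (hTpos : ∀ ω, ∀ u ∈ K, T ω u ∈ K)
    (hTnontriv : ∀ ω, ∀ u ∈ K, u ≠ 0 → T ω u ≠ 0) :
    ∀ ω : Ω, ∃ v : ℤ → E,
      (∀ n : ℤ, v n ∈ K ∧ v n ≠ 0) ∧
      (∀ n : ℤ, v (n + 1) = T ((θ ^ n) ω) (v n)) := by
  intro ω
  classical
  have h0K : (0 : E) ∈ K := by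
    have h : (0 : E) ∈ K ∩ (-K) := by rw [hKpointed]; rfl
    exact h.1
  obtain ⟨u0, hu0K, hu0ne⟩ : ∃ u ∈ K, u ≠ 0 := by
    by_contra h
    push_neg at h
    apply hKnontrivial
    ext u
    simp only [Set.mem_singleton_iff]
    exact ⟨fun hu => h u hu, fun hu => hu ▸ h0K⟩
  -- the compact set of normalized vectors of K
  set S : Set E := {u | u ∈ K ∧ ‖u‖ = 1} with hSdef
  have hScompact : IsCompact S := by
    have h1 : S = K ∩ Metric.sphere (0 : E) 1 := by
      ext u
      simp [hSdef, Metric.mem_sphere, dist_zero_right]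
    rw [h1]
    exact (isCompact_sphere (0 : E) 1).inter_left hKclosed
  have hmemS : ∀ u : E, u ∈ K → u ≠ 0 → ‖u‖⁻¹ • u ∈ S := by
    intro u hu hne
    exact ⟨hKcone _ (by positivity) u hu, norm_smul_inv_norm hne⟩
  have hSK : ∀ u : ↥S, (u : E) ∈ K := fun u => u.2.1
  have hSne : ∀ u : ↥S, (u : E) ≠ 0 := fun u h => by simpa [h] using u.2.2
  haveI : CompactSpace ↥S := isCompact_iff_compactSpace.mp hScompact
  -- backward step operators
  set A : ℕ → E →L[ℝ] E := fun j => T ((θ ^ (-(j + 1 : ℤ))) ω) with hAdef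
  have hA : ∀ (j : ℕ) (u : ↥S), A j (u : E) ∈ K ∧ A j (u : E) ≠ 0 := fun j u =>
    ⟨hTpos _ _ (hSK u), hTnontriv _ _ (hSK u) (hSne u)⟩
  -- normalized backward step maps on S
  have gdef : ∀ (j : ℕ) (u : ↥S), ‖A j (u : E)‖⁻¹ • A j (u : E) ∈ S := fun j u =>
    hmemS _ (hA j u).1 (hA j u).2
  set g : ℕ → ↥S → ↥S := fun j u => ⟨‖A j (u : E)‖⁻¹ • A j (u : E), gdef j u⟩ with hgdef
  have hgcont : ∀ j, Continuous (g j) := by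
    intro j
    apply Continuous.subtype_mk
    have hc : Continuous fun u : ↥S => A j (u : E) :=
      (A j).continuous.comp continuous_subtype_val
    exact (hc.norm.inv₀ fun u => norm_ne_zero_iff.mpr (hA j u).2).smul hc
  set s0 : ↥S := ⟨‖u0‖⁻¹ • u0, hmemS u0 hu0K hu0ne⟩ with hs0def
  -- sets of partial backward chains
  set C : ℕ → Set (ℕ → ↥S) := fun m => {x | ∀ j, j < m → x j = g j (x (j + 1))} with hCdef
  have hCclosed : ∀ m, IsClosed (C m) := by
    intro m
    have h1 : C m = ⋂ j, ⋂ (_ : j < m), {x : ℕ → ↥S | x j = g j (x (j + 1))} := by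
      ext x; simp [hCdef]
    rw [h1]
    refine isClosed_iInter fun j => isClosed_iInter fun _ => ?_
    exact isClosed_eq (continuous_apply j) ((hgcont j).comp (continuous_apply (j + 1)))
  have hCne : ∀ m, (C m).Nonempty := by
    intro m
    set y : ℕ → ↥S := fun i => Nat.rec s0 (fun i prev => g (m - (i + 1)) prev) i with hydef
    have hy : ∀ i, y (i + 1) = g (m - (i + 1)) (y i) := fun i => rfl
    refine ⟨fun j => if j < m then y (m - j) else s0, fun j hj => ?_⟩
    simp only
    rw [if_pos hj]
    by_cases hj1 : j + 1 < m
    · rw [if_pos hj1]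
      have h2 : m - j = (m - (j + 1)) + 1 := by omega
      rw [h2, hy]
      have h3 : m - (m - (j + 1) + 1) = j := by omega
      rw [h3]
    · rw [if_neg hj1]
      have h2 : m - j = 0 + 1 := by omega
      rw [h2, hy]
      have h3 : m - (0 + 1) = j := by omega
      rw [h3]
      rfl
  obtain ⟨x, hx⟩ : (⋂ m, C m).Nonempty :=
    IsCompact.nonempty_iInter_of_sequence_nonempty_isCompact_isClosed C
      (fun m z hz j hj => hz j (hj.trans (Nat.lt_succ_self m))) hCne
      ((hCclosed 0).isCompact) hCclosed
  have hxrec : ∀ j, x j = g j (x (j + 1)) := by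
    intro j
    exact (Set.mem_iInter.mp hx (j + 1)) j (Nat.lt_succ_self j)
  -- the scalars
  set c : ℕ → ℝ := fun j => Nat.rec 1 (fun j prev => prev * ‖A j (x (j + 1) : E)‖⁻¹) j
    with hcdef
  have hcstep : ∀ j, c (j + 1) = c j * ‖A j (x (j + 1) : E)‖⁻¹ := fun j => rfl
  have hcpos : ∀ j, 0 < c j := by
    intro j
    induction j with
    | zero => exact one_pos
    | succ j ih =>
      rw [hcstep]
      exact mul_pos ih (inv_pos.mpr (norm_pos_iff.mpr (hA j (x (j + 1))).2))
  -- the forward orbit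
  set f : ℕ → E := fun n => Nat.rec ((x 0 : E)) (fun n prev => T ((θ ^ (n : ℤ)) ω) prev) n
    with hfdef
  have hfstep : ∀ n, f (n + 1) = T ((θ ^ (n : ℤ)) ω) (f n) := fun n => rfl
  have hfK : ∀ n, f n ∈ K ∧ f n ≠ 0 := by
    intro n
    induction n with
    | zero => exact ⟨hSK (x 0), hSne (x 0)⟩
    | succ n ih =>
      rw [hfstep]
      exact ⟨hTpos _ _ ih.1, hTnontriv _ _ ih.1 ih.2⟩
  refine ⟨fun n => match n with
    | .ofNat k => f k
    | .negSucc k => c (k + 1) • (x (k + 1) : E), ?_, ?_⟩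
  · intro n
    cases n with
    | ofNat k => exact hfK k
    | negSucc k =>
      show c (k + 1) • (x (k + 1) : E) ∈ K ∧ c (k + 1) • (x (k + 1) : E) ≠ 0
      exact ⟨hKcone _ (hcpos (k + 1)).le _ (hSK (x (k + 1))),
        smul_ne_zero (hcpos (k + 1)).ne' (hSne (x (k + 1)))⟩
  · intro n
    cases n with
    | ofNat k =>
      show f (k + 1) = T ((θ ^ (Int.ofNat k)) ω) (f k)
      rw [hfstep, Int.ofNat_eq_natCast]
    | negSucc k =>
      cases k with
      | zero =>
        show (x 0 : E) = T ((θ ^ (Int.negSucc 0)) ω) (c 1 • (x 1 : E))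
        have h' : (x 0 : E) = ‖A 0 (x 1 : E)‖⁻¹ • A 0 (x 1 : E) :=
          congrArg Subtype.val (hxrec 0)
        have hc1 : c 1 = ‖A 0 (x 1 : E)‖⁻¹ := by
          show c (0 + 1) = ‖A 0 (x 1 : E)‖⁻¹
          rw [hcstep 0, show c 0 = 1 from rfl, one_mul]
        show (x 0 : E) = A 0 (c 1 • (x 1 : E))
        rw [_root_.map_smul, hc1, h']
      | succ k =>
        show c (k + 1) • (x (k + 1) : E)
            = T ((θ ^ (Int.negSucc (k + 1))) ω) (c (k + 2) • (x (k + 2) : E))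
        show c (k + 1) • (x (k + 1) : E) = A (k + 1) (c (k + 2) • (x (k + 2) : E))
        have h' : (x (k + 1) : E) = ‖A (k + 1) (x (k + 2) : E)‖⁻¹ • A (k + 1) (x (k + 2) : E) :=
          congrArg Subtype.val (hxrec (k + 1))
        rw [_root_.map_smul, h', hcstep (k + 1), smul_smul]
end

section
/- Assume s_{ij}(ω) ≥ 0 for all ω ∈ Ω and all i, j. Then the following two conditions are equivalent: (a) there exist e ∈ X⁺⁺ with ‖e‖ = 1 and a measurable function κ : Ω → [1, ∞) with ω ↦ ln⁺ln κ(ω) in L₁(Ω, 𝔉, ℙ) such that for every ω ∈ Ω and every u ∈ X⁺ ∖ {0} there exists β(ω,u) > 0 with β(ω,u)·e ≤ S(ω)u ≤ κ(ω)β(ω,u)·e componentwise; (b) s_{ij}(ω) > 0 for all ω, i, j, and for each i = 1,…,N the function ω ↦ ln⁺( ln M_{c,i}(ω) − ln m_{c,i}(ω) ) belongs to L₁(Ω, 𝔉, ℙ). -/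
open MeasureTheory Matrix

/-- `ln⁺ x = max (ln x) 0` (with `Real.log 0 = 0`, so `ln⁺ 0 = 0`). -/
noncomputable def lnplus (x : ℝ) : ℝ := max (Real.log x) 0

/-- The Euclidean norm on `Fin N → ℝ`. -/
noncomputable def enorm' {N : ℕ} (u : Fin N → ℝ) : ℝ := Real.sqrt (∑ i, (u i) ^ 2)

lemma lnplus_nonneg (x : ℝ) : 0 ≤ lnplus x := le_max_right _ _

lemma lnplus_mono {a b : ℝ} (ha : 0 ≤ a) (hab : a ≤ b) : lnplus a ≤ lnplus b := by
  rcases eq_or_lt_of_le ha with h | h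
  · simp [lnplus, ← h, Real.log_zero]
  · exact max_le_max (Real.log_le_log h hab) le_rfl

lemma log_le_lnplus (x : ℝ) : Real.log x ≤ lnplus x := le_max_left _ _

lemma lnplus_add_le {a c : ℝ} (ha : 0 ≤ a) (hc : 0 ≤ c) :
    lnplus (a + c) ≤ Real.log 2 + lnplus a + lnplus c := by
  have hrhs : 0 ≤ Real.log 2 + lnplus a + lnplus c := by
    have := Real.log_nonneg (by norm_num : (1:ℝ) ≤ 2)
    have := lnplus_nonneg a; have := lnplus_nonneg c; linarith
  have hlog : Real.log (a + c) ≤ Real.log 2 + lnplus a + lnplus c := by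
    rcases eq_or_lt_of_le (by linarith : (0:ℝ) ≤ a + c) with h | h
    · rw [← h, Real.log_zero]; exact hrhs
    · have h1 : a + c ≤ 2 * max a c := by
        rcases le_total a c with h' | h' <;> simp [max_eq_right, max_eq_left, h'] <;> linarith
      have h2 : 0 < max a c := by
        rcases le_total a c with h' | h' <;> simp [h'] <;> linarith
      calc Real.log (a + c) ≤ Real.log (2 * max a c) := Real.log_le_log h h1
        _ = Real.log 2 + Real.log (max a c) := Real.log_mul (by norm_num) h2.ne'
        _ ≤ Real.log 2 + (lnplus a + lnplus c) := by
            rcases le_total a c with h' | h'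
            · rw [max_eq_right h']
              have := log_le_lnplus c; have := lnplus_nonneg a; linarith
            · rw [max_eq_left h']
              have := log_le_lnplus a; have := lnplus_nonneg c; linarith
        _ = Real.log 2 + lnplus a + lnplus c := by ring
  exact max_le hlog hrhs

lemma measurable_lnplus : Measurable lnplus :=
  Real.measurable_log.max measurable_const

lemma exists_eq_ciSup {N : ℕ} [Nonempty (Fin N)] (f : Fin N → ℝ) :
    ∃ j, (⨆ i, f i) = f j := by
  obtain ⟨j, hj⟩ := Finite.exists_max f
  exact ⟨j, le_antisymm (ciSup_le hj) (le_ciSup (Set.finite_range f).bddAbove j)⟩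

lemma ciInf_pos' {N : ℕ} [Nonempty (Fin N)] {f : Fin N → ℝ} (hf : ∀ i, 0 < f i) :
    0 < ⨅ i, f i := by
  obtain ⟨j, hj⟩ := Finite.exists_min f
  exact lt_of_lt_of_le (hf j) (le_ciInf hj)

lemma ciInf_le_ciSup' {N : ℕ} [Nonempty (Fin N)] (f : Fin N → ℝ) :
    (⨅ i, f i) ≤ ⨆ i, f i :=
  le_trans (ciInf_le (Set.finite_range f).bddBelow (Classical.arbitrary _))
    (le_ciSup (Set.finite_range f).bddAbove (Classical.arbitrary _))

/-- Characterization of the focusing condition (B3) for a family of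
nonnegative matrices in terms of column extremes. -/
theorem stmt_2 {N : ℕ} (hN : 2 ≤ N)
    {Ω : Type*} [MeasurableSpace Ω] (ℙ : Measure Ω) [IsProbabilityMeasure ℙ]
    (θ : Equiv.Perm Ω) (hθmeas : Measurable θ) (hθinvmeas : Measurable θ.symm)
    (hθmp : MeasurePreserving θ ℙ ℙ) (hθerg : Ergodic (θ : Ω → Ω) ℙ)
    (S : Ω → Matrix (Fin N) (Fin N) ℝ)
    (hSmeas : ∀ i j, Measurable fun ω => S ω i j)
    (hSnonneg : ∀ ω i j, 0 ≤ S ω i j) :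
    (∃ e : Fin N → ℝ, (∀ i, 0 < e i) ∧ enorm' e = 1 ∧
      ∃ κ : Ω → ℝ, Measurable κ ∧ (∀ ω, 1 ≤ κ ω) ∧
        Integrable (fun ω => lnplus (Real.log (κ ω))) ℙ ∧
        ∀ ω, ∀ u : Fin N → ℝ, (∀ i, 0 ≤ u i) → u ≠ 0 →
          ∃ β : ℝ, 0 < β ∧
            ∀ i, β * e i ≤ (S ω).mulVec u i ∧
              (S ω).mulVec u i ≤ κ ω * (β * e i))
    ↔
    ((∀ ω i j, 0 < S ω i j) ∧
      ∀ i : Fin N, Integrable (fun ω =>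
        lnplus (Real.log (⨆ j, S ω j i) - Real.log (⨅ j, S ω j i))) ℙ) := by
  haveI : Nonempty (Fin N) := Fin.pos_iff_nonempty.mp (by omega)
  have hmv : ∀ ω (u : Fin N → ℝ) i, (S ω).mulVec u i = ∑ j, S ω i j * u j := by
    intro ω u i; simp [Matrix.mulVec, dotProduct]
  constructor
  · rintro ⟨e, hepos, -, κ, hκmeas, hκ1, hκint, hcond⟩
    -- For each ω and column index j, apply the condition to the basis vector
    have hbasis : ∀ ω (j : Fin N), ∃ β : ℝ, 0 < β ∧
        ∀ i, β * e i ≤ S ω i j ∧ S ω i j ≤ κ ω * (β * e i) := by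
      intro ω j
      obtain ⟨β, hβ, h⟩ := hcond ω (Pi.single j 1)
        (fun k => by
          rcases eq_or_ne k j with rfl | hk
          · simp
          · simp [Pi.single_apply, hk])
        (fun h0 => by have := congrFun h0 j; simp at this)
      refine ⟨β, hβ, fun i => ?_⟩
      have : (S ω).mulVec (Pi.single j 1) i = S ω i j := by
        simp [Matrix.mulVec_single]
      rw [← this]; exact h i
    have hpos : ∀ ω i j, 0 < S ω i j := by
      intro ω i j
      obtain ⟨β, hβ, h⟩ := hbasis ω j
      exact lt_of_lt_of_le (mul_pos hβ (hepos i)) (h i).1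
    refine ⟨hpos, fun i => ?_⟩
    set emax := ⨆ k, e k with hemax
    set emin := ⨅ k, e k with hemin
    have heminpos : 0 < emin := ciInf_pos' hepos
    have heminmax : emin ≤ emax := ciInf_le_ciSup' e
    have hemaxpos : 0 < emax := lt_of_lt_of_le heminpos heminmax
    set C := Real.log emax - Real.log emin with hC
    have hC0 : 0 ≤ C := sub_nonneg.mpr (Real.log_le_log heminpos heminmax)
    -- pointwise bound
    have hbound : ∀ ω, lnplus (Real.log (⨆ j, S ω j i) - Real.log (⨅ j, S ω j i))
        ≤ Real.log 2 + lnplus (Real.log (κ ω)) + lnplus C := by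
      intro ω
      obtain ⟨β, hβ, h⟩ := hbasis ω i
      set Mc := ⨆ j, S ω j i with hMc
      set mc := ⨅ j, S ω j i with hmc
      have hmcpos : 0 < mc := ciInf_pos' (fun j => hpos ω j i)
      have hmcMc : mc ≤ Mc := ciInf_le_ciSup' (fun j => S ω j i)
      have hsub0 : 0 ≤ Real.log Mc - Real.log mc :=
        sub_nonneg.mpr (Real.log_le_log hmcpos hmcMc)
      have hlow : β * emin ≤ mc := by
        refine le_ciInf fun j => le_trans ?_ (h j).1
        exact mul_le_mul_of_nonneg_left (ciInf_le (Set.finite_range e).bddBelow j) hβ.le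
      have hhigh : Mc ≤ κ ω * (β * emax) := by
        refine ciSup_le fun j => le_trans (h j).2 ?_
        have : β * e j ≤ β * emax :=
          mul_le_mul_of_nonneg_left (le_ciSup (Set.finite_range e).bddAbove j) hβ.le
        exact mul_le_mul_of_nonneg_left this (le_trans zero_le_one (hκ1 ω))
      have hκpos : 0 < κ ω := lt_of_lt_of_le zero_lt_one (hκ1 ω)
      have hsub : Real.log Mc - Real.log mc ≤ Real.log (κ ω) + C := by
        have h1 : Real.log Mc ≤ Real.log (κ ω) + Real.log β + Real.log emax := by
          have := Real.log_le_log (lt_of_lt_of_le (mul_pos hβ heminpos) (hlow.trans hmcMc)) hhigh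
          rwa [Real.log_mul hκpos.ne' (mul_pos hβ hemaxpos).ne',
            Real.log_mul hβ.ne' hemaxpos.ne', ← add_assoc] at this
        have h2 : Real.log β + Real.log emin ≤ Real.log mc := by
          have := Real.log_le_log (mul_pos hβ heminpos) hlow
          rwa [Real.log_mul hβ.ne' heminpos.ne'] at this
        rw [hC]; linarith
      calc lnplus (Real.log Mc - Real.log mc)
          ≤ lnplus (Real.log (κ ω) + C) := lnplus_mono hsub0 (by linarith [hsub])
        _ ≤ Real.log 2 + lnplus (Real.log (κ ω)) + lnplus C :=
            lnplus_add_le (Real.log_nonneg (hκ1 ω)) hC0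
    have hmeasf : Measurable (fun ω =>
        lnplus (Real.log (⨆ j, S ω j i) - Real.log (⨅ j, S ω j i))) := by
      apply measurable_lnplus.comp
      exact ((Real.measurable_log.comp (Measurable.iSup fun j => hSmeas j i)).sub
        (Real.measurable_log.comp (Measurable.iInf fun j => hSmeas j i)))
    refine Integrable.mono' (g := fun ω => Real.log 2 + lnplus (Real.log (κ ω)) + lnplus C)
      (((integrable_const _).add hκint).add (integrable_const _))
      hmeasf.aestronglyMeasurable ?_
    filter_upwards with ω
    rw [Real.norm_of_nonneg (lnplus_nonneg _)]
    exact hbound ω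
  · rintro ⟨hpos, hint⟩
    have hsN : 0 < Real.sqrt N := Real.sqrt_pos.mpr (by positivity)
    refine ⟨fun _ => (Real.sqrt N)⁻¹, fun _ => inv_pos.mpr hsN, ?_, ?_⟩
    · have hsum : ∑ _i : Fin N, ((Real.sqrt N)⁻¹) ^ 2 = 1 := by
        rw [Finset.sum_const, Finset.card_univ, Fintype.card_fin, nsmul_eq_mul,
          inv_pow, Real.sq_sqrt (by positivity : (0:ℝ) ≤ (N:ℝ))]
        field_simp
      rw [enorm', hsum, Real.sqrt_one]
    · set m : Ω → Fin N → ℝ := fun ω j => ⨅ k, S ω k j with hm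
      set Mc : Ω → Fin N → ℝ := fun ω j => ⨆ k, S ω k j with hMc
      have hmpos : ∀ ω j, 0 < m ω j := fun ω j => ciInf_pos' fun k => hpos ω k j
      have hmM : ∀ ω j, m ω j ≤ Mc ω j := fun ω j => ciInf_le_ciSup' (fun k => S ω k j)
      refine ⟨fun ω => ⨆ j, Mc ω j / m ω j, ?_, ?_, ?_, ?_⟩
      · exact Measurable.iSup fun j =>
          (Measurable.iSup fun k => hSmeas k j).div (Measurable.iInf fun k => hSmeas k j)
      · intro ω
        refine le_trans ?_ (le_ciSup (Set.finite_range _).bddAbove (Classical.arbitrary _))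
        exact (one_le_div (hmpos ω _)).mpr (hmM ω _)
      · refine Integrable.mono'
          (g := fun ω => ∑ j, lnplus (Real.log (Mc ω j) - Real.log (m ω j)))
          (integrable_finset_sum _ fun j _ => hint j) ?_ ?_
        · apply (measurable_lnplus.comp (Real.measurable_log.comp ?_)).aestronglyMeasurable
          exact Measurable.iSup fun j =>
            (Measurable.iSup fun k => hSmeas k j).div (Measurable.iInf fun k => hSmeas k j)
        · filter_upwards with ω
          rw [Real.norm_of_nonneg (lnplus_nonneg _)]
          obtain ⟨j0, hj0⟩ := exists_eq_ciSup (fun j => Mc ω j / m ω j)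
          rw [hj0, Real.log_div (lt_of_lt_of_le (hmpos ω j0) (hmM ω j0)).ne' (hmpos ω j0).ne']
          exact Finset.single_le_sum (f := fun j => lnplus (Real.log (Mc ω j) - Real.log (m ω j))) (fun j _ => lnplus_nonneg _) (Finset.mem_univ j0)
      · intro ω u hu hune
        obtain ⟨j1, hj1⟩ := Function.ne_iff.mp hune
        have hj1pos : 0 < u j1 := lt_of_le_of_ne (hu j1) (Ne.symm hj1)
        set L := ∑ j, m ω j * u j with hL
        have hLpos : 0 < L :=
          Finset.sum_pos' (fun j _ => mul_nonneg (hmpos ω j).le (hu j))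
            ⟨j1, Finset.mem_univ j1, mul_pos (hmpos ω j1) hj1pos⟩
        refine ⟨Real.sqrt N * L, mul_pos hsN hLpos, fun i => ?_⟩
        have he : Real.sqrt N * L * (Real.sqrt N)⁻¹ = L := by
          field_simp
        rw [he, hmv]
        constructor
        · refine Finset.sum_le_sum fun j _ => ?_
          exact mul_le_mul_of_nonneg_right (ciInf_le (Set.finite_range _).bddBelow i) (hu j)
        · have hMκ : ∀ j, Mc ω j ≤ (⨆ j', Mc ω j' / m ω j') * m ω j := by
            intro j
            have := le_ciSup (Set.finite_range fun j' => Mc ω j' / m ω j').bddAbove j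
            exact (div_le_iff₀ (hmpos ω j)).mp this
          calc ∑ j, S ω i j * u j ≤ ∑ j, Mc ω j * u j := by
                refine Finset.sum_le_sum fun j _ => ?_
                exact mul_le_mul_of_nonneg_right
                  (le_ciSup (Set.finite_range (fun k => S ω k j)).bddAbove i) (hu j)
            _ ≤ ∑ j, ((⨆ j', Mc ω j' / m ω j') * m ω j) * u j := by
                refine Finset.sum_le_sum fun j _ => ?_
                exact mul_le_mul_of_nonneg_right (hMκ j) (hu j)
            _ = (⨆ j', Mc ω j' / m ω j') * L := by
                rw [hL, Finset.mul_sum]; exact Finset.sum_congr rfl fun j _ => by ring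
end

section
/- Assume s_{ij}(ω) ≥ 0 for all ω ∈ Ω and all i, j. Then the following two conditions are equivalent: (a) there exist e, e* ∈ X⁺⁺ with ‖e‖ = ‖e*‖ = 1, ⟨e, e*⟩ > 0, and measurable functions κ, κ* : Ω → [1, ∞) with ln κ and ln κ* in L₁(Ω, 𝔉, ℙ) such that for every ω ∈ Ω and all u, u* ∈ X⁺ ∖ {0} there exist β(ω,u) > 0 and β*(ω,u*) > 0 with β(ω,u)·e ≤ S(ω)u ≤ κ(ω)β(ω,u)·e and β*(ω,u*)·e* ≤ S(θ⁻¹ω)ᵀu* ≤ κ*(ω)β*(ω,u*)·e* componentwise; (b) s_{ij}(ω) > 0 for all ω, i, j, and for each i = 1,…,N the functions ω ↦ ln M_{c,i}(ω) − ln m_{c,i}(ω) and ω ↦ ln M_{r,i}(ω) − ln m_{r,i}(ω) belong to L₁(Ω, 𝔉, ℙ). -/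
open MeasureTheory Matrix

section helpers
variable {N : ℕ}

lemma myInf_pos [Nonempty (Fin N)] {f : Fin N → ℝ} (h : ∀ i, 0 < f i) : 0 < ⨅ i, f i := by
  obtain ⟨i, hi⟩ := exists_eq_ciInf_of_finite (f := f)
  rw [← hi]; exact h i

lemma my_inf_le [Nonempty (Fin N)] (f : Fin N → ℝ) (i : Fin N) : ⨅ j, f j ≤ f i :=
  ciInf_le (Set.Finite.bddBelow (Set.finite_range f)) i

lemma my_le_sup [Nonempty (Fin N)] (f : Fin N → ℝ) (i : Fin N) : f i ≤ ⨆ j, f j :=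
  le_ciSup (Set.Finite.bddAbove (Set.finite_range f)) i

lemma ratio_bound [Nonempty (Fin N)] {a e : Fin N → ℝ} (he : ∀ k, 0 < e k)
    {κ β : ℝ} (hβ : 0 < β) (hκ : 1 ≤ κ)
    (h : ∀ k, β * e k ≤ a k ∧ a k ≤ κ * (β * e k)) :
    0 ≤ Real.log (⨆ k, a k) - Real.log (⨅ k, a k) ∧
    Real.log (⨆ k, a k) - Real.log (⨅ k, a k) ≤
      Real.log κ + (Real.log (⨆ k, e k) - Real.log (⨅ k, e k)) := by
  have ha : ∀ k, 0 < a k := fun k => lt_of_lt_of_le (mul_pos hβ (he k)) (h k).1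
  have hinf : 0 < ⨅ k, a k := myInf_pos ha
  have hsup : (⨅ k, a k) ≤ ⨆ k, a k := by
    obtain ⟨i, hi⟩ := exists_eq_ciInf_of_finite (f := a)
    rw [← hi]; exact my_le_sup a i
  refine ⟨by simpa using Real.log_le_log hinf hsup, ?_⟩
  obtain ⟨k2, hk2⟩ := exists_eq_ciSup_of_finite (f := a)
  obtain ⟨k1, hk1⟩ := exists_eq_ciInf_of_finite (f := a)
  rw [← hk2, ← hk1]
  have hκ0 : (0:ℝ) < κ := lt_of_lt_of_le one_pos hκ
  have h1 : Real.log (a k2) ≤ Real.log κ + Real.log β + Real.log (e k2) := by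
    calc Real.log (a k2) ≤ Real.log (κ * (β * e k2)) :=
          Real.log_le_log (ha k2) (h k2).2
      _ = Real.log κ + Real.log β + Real.log (e k2) := by
          rw [Real.log_mul (ne_of_gt hκ0) (ne_of_gt (mul_pos hβ (he k2))),
            Real.log_mul (ne_of_gt hβ) (ne_of_gt (he k2)), add_assoc]
  have h2 : Real.log β + Real.log (e k1) ≤ Real.log (a k1) := by
    calc Real.log β + Real.log (e k1) = Real.log (β * e k1) :=
          (Real.log_mul (ne_of_gt hβ) (ne_of_gt (he k1))).symm
      _ ≤ Real.log (a k1) := Real.log_le_log (mul_pos hβ (he k1)) (h k1).1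
  have hE : 0 < ⨅ k, e k := myInf_pos he
  have h3 : Real.log (e k2) ≤ Real.log (⨆ k, e k) := Real.log_le_log (he k2) (my_le_sup e k2)
  have h4 : Real.log (⨅ k, e k) ≤ Real.log (e k1) := Real.log_le_log hE (my_inf_le e k1)
  linarith

lemma one_le_K [Nonempty (Fin N)] {A : Matrix (Fin N) (Fin N) ℝ} (hA : ∀ i j, 0 < A i j) :
    1 ≤ ⨆ j, (⨆ k, A k j) / (⨅ k, A k j) := by
  obtain ⟨j⟩ := (inferInstance : Nonempty (Fin N))
  refine le_trans ?_ (my_le_sup _ j)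
  have hinf : 0 < ⨅ k, A k j := myInf_pos (fun k => hA k j)
  rw [le_div_iff₀ hinf, one_mul]
  obtain ⟨k, hk⟩ := exists_eq_ciInf_of_finite (f := fun k => A k j)
  rw [← hk]; exact my_le_sup (fun k => A k j) k

lemma logK_le [Nonempty (Fin N)] {A : Matrix (Fin N) (Fin N) ℝ} (hA : ∀ i j, 0 < A i j) :
    Real.log (⨆ j, (⨆ k, A k j) / (⨅ k, A k j)) ≤
      ∑ j, (Real.log (⨆ k, A k j) - Real.log (⨅ k, A k j)) := by
  obtain ⟨j0, hj0⟩ := exists_eq_ciSup_of_finite (f := fun j => (⨆ k, A k j) / (⨅ k, A k j))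
  rw [← hj0]
  have key : ∀ j : Fin N, Real.log ((⨆ k, A k j) / (⨅ k, A k j)) =
      Real.log (⨆ k, A k j) - Real.log (⨅ k, A k j) := by
    intro j
    have hinf : 0 < ⨅ k, A k j := myInf_pos (fun k => hA k j)
    have hsup : 0 < ⨆ k, A k j :=
      lt_of_lt_of_le (hA (Classical.arbitrary _) j) (my_le_sup (fun k => A k j) _)
    exact Real.log_div (ne_of_gt hsup) (ne_of_gt hinf)
  rw [key j0]
  refine Finset.single_le_sum (f := fun j => Real.log (⨆ k, A k j) - Real.log (⨅ k, A k j))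
    (fun j _ => ?_) (Finset.mem_univ j0)
  show 0 ≤ Real.log (⨆ k, A k j) - Real.log (⨅ k, A k j)
  have hinf : 0 < ⨅ k, A k j := myInf_pos (fun k => hA k j)
  have : (⨅ k, A k j) ≤ ⨆ k, A k j := by
    obtain ⟨k, hk⟩ := exists_eq_ciInf_of_finite (f := fun k => A k j)
    rw [← hk]; exact my_le_sup (fun k => A k j) k
  have := Real.log_le_log hinf this
  linarith

lemma focus_lemma [Nonempty (Fin N)] {A : Matrix (Fin N) (Fin N) ℝ} (hA : ∀ i j, 0 < A i j)
    {u : Fin N → ℝ} (hu : ∀ i, 0 ≤ u i) (hu0 : u ≠ 0) :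
    ∃ β : ℝ, 0 < β ∧ ∀ i,
      β * (Real.sqrt N)⁻¹ ≤ A.mulVec u i ∧
      A.mulVec u i ≤ (⨆ j, (⨆ k, A k j) / (⨅ k, A k j)) * (β * (Real.sqrt N)⁻¹) := by
  set K := ⨆ j, (⨆ k, A k j) / (⨅ k, A k j) with hK
  have hN0 : (0:ℝ) < N := by
    have := Fin.pos_iff_nonempty.2 (inferInstance : Nonempty (Fin N))
    exact_mod_cast this
  have hsN : 0 < Real.sqrt N := Real.sqrt_pos.2 hN0
  obtain ⟨j0, hj0⟩ : ∃ j, 0 < u j := by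
    by_contra h
    push_neg at h
    exact hu0 (funext fun j => le_antisymm (h j) (hu j))
  have hv : ∀ i, 0 < A.mulVec u i := by
    intro i
    have : A i j0 * u j0 ≤ ∑ j, A i j * u j :=
      Finset.single_le_sum (fun j _ => mul_nonneg (le_of_lt (hA i j)) (hu j)) (Finset.mem_univ j0)
    exact lt_of_lt_of_le (mul_pos (hA i j0) hj0) this
  have hvinf : 0 < ⨅ i, A.mulVec u i := myInf_pos hv
  refine ⟨Real.sqrt N * ⨅ i, A.mulVec u i, mul_pos hsN hvinf, fun i => ?_⟩
  have hβe : Real.sqrt N * (⨅ i, A.mulVec u i) * (Real.sqrt N)⁻¹ = ⨅ i, A.mulVec u i := by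
    field_simp
  rw [hβe]
  refine ⟨my_inf_le _ i, ?_⟩
  obtain ⟨m, hm⟩ := exists_eq_ciInf_of_finite (f := A.mulVec u)
  rw [← hm]
  have hK1 : 1 ≤ K := one_le_K hA
  have hK0 : 0 ≤ K := le_trans zero_le_one hK1
  calc A.mulVec u i = ∑ j, A i j * u j := rfl
    _ ≤ ∑ j, (K * A m j) * u j := by
        refine Finset.sum_le_sum (fun j _ => mul_le_mul_of_nonneg_right ?_ (hu j))
        have hinf : 0 < ⨅ k, A k j := myInf_pos (fun k => hA k j)
        calc A i j ≤ ⨆ k, A k j := my_le_sup (fun k => A k j) i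
          _ = ((⨆ k, A k j) / (⨅ k, A k j)) * (⨅ k, A k j) := by field_simp
          _ ≤ K * (⨅ k, A k j) :=
              mul_le_mul_of_nonneg_right
                (my_le_sup (fun j' => (⨆ k, A k j') / (⨅ k, A k j')) j) (le_of_lt hinf)
          _ ≤ K * A m j := mul_le_mul_of_nonneg_left (my_inf_le _ m) hK0
    _ = K * ∑ j, A m j * u j := by rw [Finset.mul_sum]; simp [mul_assoc]
    _ = K * A.mulVec u m := rfl

end helpers

/-- Characterization of the strong focusing condition (B4) for a family
of nonnegative matrices in terms of integrability of logarithmic column and row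
oscillations. -/
theorem stmt_4 {N : ℕ} (hN : 2 ≤ N)
    {Ω : Type*} [MeasurableSpace Ω] (ℙ : Measure Ω) [IsProbabilityMeasure ℙ]
    (θ : Equiv.Perm Ω) (hθmeas : Measurable θ) (hθinvmeas : Measurable θ.symm)
    (hθmp : MeasurePreserving θ ℙ ℙ) (hθerg : Ergodic (θ : Ω → Ω) ℙ)
    (S : Ω → Matrix (Fin N) (Fin N) ℝ)
    (hSmeas : ∀ i j, Measurable fun ω => S ω i j)
    (hSnonneg : ∀ ω i j, 0 ≤ S ω i j) :
    (∃ e estar : Fin N → ℝ, (∀ i, 0 < e i) ∧ (∀ i, 0 < estar i) ∧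
      enorm' e = 1 ∧ enorm' estar = 1 ∧ 0 < ∑ i, e i * estar i ∧
      ∃ κ κstar : Ω → ℝ, Measurable κ ∧ Measurable κstar ∧
        (∀ ω, 1 ≤ κ ω) ∧ (∀ ω, 1 ≤ κstar ω) ∧
        Integrable (fun ω => Real.log (κ ω)) ℙ ∧
        Integrable (fun ω => Real.log (κstar ω)) ℙ ∧
        (∀ ω, ∀ u : Fin N → ℝ, (∀ i, 0 ≤ u i) → u ≠ 0 →
          ∃ β : ℝ, 0 < β ∧
            ∀ i, β * e i ≤ (S ω).mulVec u i ∧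
              (S ω).mulVec u i ≤ κ ω * (β * e i)) ∧
        (∀ ω, ∀ ustar : Fin N → ℝ, (∀ i, 0 ≤ ustar i) → ustar ≠ 0 →
          ∃ βstar : ℝ, 0 < βstar ∧
            ∀ i, βstar * estar i ≤ (S (θ.symm ω)).transpose.mulVec ustar i ∧
              (S (θ.symm ω)).transpose.mulVec ustar i ≤ κstar ω * (βstar * estar i)))
    ↔
    ((∀ ω i j, 0 < S ω i j) ∧
      (∀ i : Fin N, Integrable (fun ω =>
        Real.log (⨆ j, S ω j i) - Real.log (⨅ j, S ω j i)) ℙ) ∧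
      (∀ i : Fin N, Integrable (fun ω =>
        Real.log (⨆ j, S ω i j) - Real.log (⨅ j, S ω i j)) ℙ)) := by
  classical
  haveI : Nonempty (Fin N) := ⟨⟨0, by omega⟩⟩
  have hN0 : (0:ℝ) < N := by exact_mod_cast lt_of_lt_of_le two_pos hN
  have hsingle_nonneg : ∀ j k : Fin N, (0:ℝ) ≤ (Pi.single j 1 : Fin N → ℝ) k := by
    intro j k
    rcases eq_or_ne k j with rfl | h
    · simp
    · simp [Pi.single_eq_of_ne h]
  have hsingle_ne : ∀ j : Fin N, (Pi.single j 1 : Fin N → ℝ) ≠ 0 := by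
    intro j h
    have := congrFun h j
    simp at this
  constructor
  · rintro ⟨e, estar, he, hestar, -, -, -, κ, κstar, hκm, hκsm, hκ1, hκs1, hκint, hκsint,
      hcolB, hrowB⟩
    -- (a) ⇒ (b)
    have key_col : ∀ ω i, ∃ β : ℝ, 0 < β ∧
        ∀ k, β * e k ≤ S ω k i ∧ S ω k i ≤ κ ω * (β * e k) := by
      intro ω i
      obtain ⟨β, hβ, h⟩ := hcolB ω (Pi.single i 1) (hsingle_nonneg i) (hsingle_ne i)
      refine ⟨β, hβ, fun k => ?_⟩
      have := h k
      simpa [Matrix.mulVec_single] using this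
    have key_row : ∀ ω i, ∃ β : ℝ, 0 < β ∧
        ∀ k, β * estar k ≤ S ω i k ∧ S ω i k ≤ κstar (θ ω) * (β * estar k) := by
      intro ω i
      obtain ⟨β, hβ, h⟩ := hrowB (θ ω) (Pi.single i 1) (hsingle_nonneg i) (hsingle_ne i)
      refine ⟨β, hβ, fun k => ?_⟩
      have := h k
      simpa [Matrix.mulVec_single, Matrix.transpose_apply, Equiv.symm_apply_apply] using this
    have hpos : ∀ ω i j, 0 < S ω i j := by
      intro ω i j
      obtain ⟨β, hβ, h⟩ := key_col ω j
      exact lt_of_lt_of_le (mul_pos hβ (he i)) (h i).1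
    refine ⟨hpos, ?_, ?_⟩
    · intro i
      set C := Real.log (⨆ k, e k) - Real.log (⨅ k, e k) with hC
      have hbound : ∀ ω, 0 ≤ Real.log (⨆ j, S ω j i) - Real.log (⨅ j, S ω j i) ∧
          Real.log (⨆ j, S ω j i) - Real.log (⨅ j, S ω j i) ≤ Real.log (κ ω) + C := by
        intro ω
        obtain ⟨β, hβ, h⟩ := key_col ω i
        exact ratio_bound he hβ (hκ1 ω) h
      have hmeas : Measurable (fun ω => Real.log (⨆ j, S ω j i) - Real.log (⨅ j, S ω j i)) :=
        ((Measurable.iSup (fun j => hSmeas j i)).log).sub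
          ((Measurable.iInf (fun j => hSmeas j i)).log)
      refine Integrable.mono' (hκint.add (integrable_const C)) hmeas.aestronglyMeasurable ?_
      filter_upwards with ω
      rw [Real.norm_eq_abs, abs_of_nonneg (hbound ω).1]
      exact (hbound ω).2
    · intro i
      set C := Real.log (⨆ k, estar k) - Real.log (⨅ k, estar k) with hC
      have hbound : ∀ ω, 0 ≤ Real.log (⨆ j, S ω i j) - Real.log (⨅ j, S ω i j) ∧
          Real.log (⨆ j, S ω i j) - Real.log (⨅ j, S ω i j) ≤ Real.log (κstar (θ ω)) + C := by
        intro ω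
        obtain ⟨β, hβ, h⟩ := key_row ω i
        exact ratio_bound hestar hβ (hκs1 (θ ω)) h
      have hmeas : Measurable (fun ω => Real.log (⨆ j, S ω i j) - Real.log (⨅ j, S ω i j)) :=
        ((Measurable.iSup (fun j => hSmeas i j)).log).sub
          ((Measurable.iInf (fun j => hSmeas i j)).log)
      have hcomp : Integrable (fun ω => Real.log (κstar (θ ω))) ℙ := by
        have emb : MeasurableEmbedding (θ : Ω → Ω) :=
          (MeasurableEquiv.mk θ hθmeas hθinvmeas).measurableEmbedding
        exact (MeasurePreserving.integrable_comp_emb hθmp emb).2 hκsint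
      refine Integrable.mono' (hcomp.add (integrable_const C)) hmeas.aestronglyMeasurable ?_
      filter_upwards with ω
      rw [Real.norm_eq_abs, abs_of_nonneg (hbound ω).1]
      exact (hbound ω).2
  · rintro ⟨hpos, hcol, hrow⟩
    -- (b) ⇒ (a)
    set e : Fin N → ℝ := fun _ => (Real.sqrt N)⁻¹ with he_def
    have hsN : 0 < Real.sqrt N := Real.sqrt_pos.2 hN0
    have he : ∀ i, 0 < e i := fun _ => inv_pos.2 hsN
    have henorm : enorm' e = 1 := by
      unfold enorm'
      have hsq : ∀ i : Fin N, (e i) ^ 2 = (N:ℝ)⁻¹ := by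
        intro i
        rw [he_def]
        rw [inv_pow, Real.sq_sqrt (le_of_lt hN0)]
      rw [Finset.sum_congr rfl (fun i _ => hsq i), Finset.sum_const, Finset.card_univ,
        Fintype.card_fin, nsmul_eq_mul, mul_inv_cancel₀ (ne_of_gt hN0), Real.sqrt_one]
    have hposT : ∀ ω i j, (0:ℝ) < (S (θ.symm ω)).transpose i j := by
      intro ω i j
      rw [Matrix.transpose_apply]
      exact hpos _ j i
    set κ : Ω → ℝ := fun ω => ⨆ j, (⨆ k, S ω k j) / (⨅ k, S ω k j) with hκ_def
    set κstar : Ω → ℝ := fun ω =>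
      ⨆ j, (⨆ k, (S (θ.symm ω)).transpose k j) / (⨅ k, (S (θ.symm ω)).transpose k j)
      with hκstar_def
    have hκm : Measurable κ :=
      Measurable.iSup (fun j =>
        (Measurable.iSup (fun k => hSmeas k j)).div (Measurable.iInf (fun k => hSmeas k j)))
    have hκsm : Measurable κstar := by
      refine Measurable.iSup (fun j => Measurable.div ?_ ?_)
      · exact Measurable.iSup (fun k => ((hSmeas j k).comp hθinvmeas))
      · exact Measurable.iInf (fun k => ((hSmeas j k).comp hθinvmeas))
    have hκ1 : ∀ ω, 1 ≤ κ ω := fun ω => one_le_K (hpos ω)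
    have hκs1 : ∀ ω, 1 ≤ κstar ω := fun ω => one_le_K (hposT ω)
    have hκint : Integrable (fun ω => Real.log (κ ω)) ℙ := by
      refine Integrable.mono'
        (integrable_finset_sum Finset.univ (fun j (_ : j ∈ Finset.univ) => hcol j))
        (hκm.log).aestronglyMeasurable ?_
      filter_upwards with ω
      rw [Real.norm_eq_abs, abs_of_nonneg (Real.log_nonneg (hκ1 ω))]
      exact logK_le (hpos ω)
    have hκsint : Integrable (fun ω => Real.log (κstar ω)) ℙ := by
      have hF : Integrable (fun ω =>
          Real.log (⨆ j, (⨆ k, (S ω).transpose k j) / (⨅ k, (S ω).transpose k j))) ℙ := by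
        have hFm : Measurable (fun ω =>
            Real.log (⨆ j, (⨆ k, (S ω).transpose k j) / (⨅ k, (S ω).transpose k j))) := by
          refine Measurable.log (Measurable.iSup (fun j => Measurable.div ?_ ?_))
          · exact Measurable.iSup (fun k => hSmeas j k)
          · exact Measurable.iInf (fun k => hSmeas j k)
        refine Integrable.mono'
          (integrable_finset_sum Finset.univ (fun j (_ : j ∈ Finset.univ) => hrow j))
          hFm.aestronglyMeasurable ?_
        filter_upwards with ω
        have hTpos : ∀ i j, (0:ℝ) < (S ω).transpose i j := fun i j => by
          rw [Matrix.transpose_apply]; exact hpos ω j i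
        rw [Real.norm_eq_abs, abs_of_nonneg (Real.log_nonneg (one_le_K hTpos))]
        exact le_trans (logK_le hTpos) (le_of_eq (by
          refine Finset.sum_congr rfl (fun j _ => ?_)
          simp [Matrix.transpose_apply]))
      have emb : MeasurableEmbedding (θ.symm : Ω → Ω) :=
        (MeasurableEquiv.mk θ hθmeas hθinvmeas).symm.measurableEmbedding
      have hmp : MeasurePreserving (θ.symm : Ω → Ω) ℙ ℙ :=
        MeasurePreserving.symm (MeasurableEquiv.mk θ hθmeas hθinvmeas) hθmp
      exact (MeasurePreserving.integrable_comp_emb hmp emb).2 hF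
    refine ⟨e, e, he, he, henorm, henorm, ?_, κ, κstar, hκm, hκsm, hκ1, hκs1, hκint, hκsint,
      ?_, ?_⟩
    · exact Finset.sum_pos (fun i _ => mul_pos (he i) (he i)) Finset.univ_nonempty
    · intro ω u hu hu0
      exact focus_lemma (hpos ω) hu hu0
    · intro ω u hu hu0
      exact focus_lemma (hposT ω) hu hu0
end

section
/- Assume s_{ij}(ω) > 0 for all ω ∈ Ω and all i, j. Then the following two conditions are equivalent: (a) there exist ē ∈ X⁺⁺ with ‖ē‖ = 1 and a measurable function ν : Ω → (0, ∞) with ω ↦ ln⁻ν(ω) in L₁(Ω, 𝔉, ℙ) such that S(ω)ē ≥ ν(ω)·ē componentwise for every ω ∈ Ω; (b) m_r(ω) > 0 for every ω and the function ω ↦ ln⁻m_r(ω) belongs to L₁(Ω, 𝔉, ℙ), where m_r(ω) := min_{1≤i≤N} Σ_{j=1}^{N} s_{ij}(ω). -/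
open MeasureTheory Matrix

/-- `ln⁻ x = max (− ln x) 0`. -/
noncomputable def lnminus (x : ℝ) : ℝ := max (-Real.log x) 0

lemma lnminus_nonneg (x : ℝ) : 0 ≤ lnminus x := le_max_right _ _

lemma lnminus_anti {x y : ℝ} (hx : 0 < x) (hxy : x ≤ y) : lnminus y ≤ lnminus x := by
  unfold lnminus
  exact max_le (le_max_of_le_left (by
    have := Real.log_le_log hx hxy
    linarith)) (le_max_right _ _)

lemma lnminus_mul_le {c x : ℝ} (hc : 0 < c) (hx : 0 < x) :
    lnminus (c * x) ≤ lnminus c + lnminus x := by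
  unfold lnminus
  refine max_le ?_ (by positivity)
  rw [Real.log_mul hc.ne' hx.ne']
  have h1 : -Real.log c ≤ max (-Real.log c) 0 := le_max_left _ _
  have h2 : -Real.log x ≤ max (-Real.log x) 0 := le_max_left _ _
  linarith

lemma lnminus_measurable : Measurable lnminus :=
  (Real.measurable_log.neg).max measurable_const

/-- Characterization of strong positivity in one direction (B5)
in terms of the minimal row sum `m_r`. -/
theorem stmt_5 {N : ℕ} (hN : 2 ≤ N)
    {Ω : Type*} [MeasurableSpace Ω] (ℙ : Measure Ω) [IsProbabilityMeasure ℙ]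
    (θ : Equiv.Perm Ω) (hθmeas : Measurable θ) (hθinvmeas : Measurable θ.symm)
    (hθmp : MeasurePreserving θ ℙ ℙ) (hθerg : Ergodic (θ : Ω → Ω) ℙ)
    (S : Ω → Matrix (Fin N) (Fin N) ℝ)
    (hSmeas : ∀ i j, Measurable fun ω => S ω i j)
    (hSpos : ∀ ω i j, 0 < S ω i j) :
    (∃ ebar : Fin N → ℝ, (∀ i, 0 < ebar i) ∧ enorm' ebar = 1 ∧
      ∃ ν : Ω → ℝ, Measurable ν ∧ (∀ ω, 0 < ν ω) ∧
        Integrable (fun ω => lnminus (ν ω)) ℙ ∧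
        ∀ ω i, ν ω * ebar i ≤ (S ω).mulVec ebar i)
    ↔
    ((∀ ω, 0 < ⨅ i, ∑ j, S ω i j) ∧
      Integrable (fun ω => lnminus (⨅ i, ∑ j, S ω i j)) ℙ) := by
  have hNpos : 0 < N := by omega
  haveI : Nonempty (Fin N) := ⟨⟨0, hNpos⟩⟩
  have hbdd : ∀ (f : Fin N → ℝ), BddBelow (Set.range f) := fun f =>
    (Set.finite_range f).bddBelow
  -- m_r measurable
  have hmmeas : Measurable (fun ω => ⨅ i, ∑ j, S ω i j) :=
    Measurable.iInf fun i => Finset.measurable_sum _ fun j _ => hSmeas i j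
  constructor
  · rintro ⟨e, hepos, -, ν, hνmeas, hνpos, hνint, hνle⟩
    -- constants
    obtain ⟨ia, hia⟩ := Finite.exists_min e
    obtain ⟨ib, hib⟩ := Finite.exists_max e
    set a := e ia with ha
    set b := e ib with hb
    have hapos : 0 < a := hepos ia
    have hbpos : 0 < b := hepos ib
    set c := a / b with hc
    have hcpos : 0 < c := div_pos hapos hbpos
    -- key bound : c * ν ω ≤ m_r ω
    have key : ∀ ω, c * ν ω ≤ ⨅ i, ∑ j, S ω i j := by
      intro ω
      refine le_ciInf fun i => ?_
      have h1 : ν ω * a ≤ (S ω).mulVec e i := by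
        calc ν ω * a ≤ ν ω * e i :=
              mul_le_mul_of_nonneg_left (hia i) (hνpos ω).le
          _ ≤ (S ω).mulVec e i := hνle ω i
      have h2 : (S ω).mulVec e i ≤ b * ∑ j, S ω i j := by
        rw [Matrix.mulVec, dotProduct, Finset.mul_sum]
        refine Finset.sum_le_sum fun j _ => ?_
        have := mul_le_mul_of_nonneg_left (hib j) (hSpos ω i j).le
        linarith [this]
      have : ν ω * a ≤ b * ∑ j, S ω i j := h1.trans h2
      rw [hc, div_mul_eq_mul_div, div_le_iff₀ hbpos]
      nlinarith
    have hmpos : ∀ ω, 0 < ⨅ i, ∑ j, S ω i j := fun ω =>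
      lt_of_lt_of_le (mul_pos hcpos (hνpos ω)) (key ω)
    refine ⟨hmpos, ?_⟩
    have hint : Integrable (fun ω => lnminus (ν ω) + lnminus c) ℙ :=
      hνint.add (integrable_const _)
    refine hint.mono ((lnminus_measurable.comp hmmeas).aestronglyMeasurable) ?_
    refine Filter.Eventually.of_forall fun ω => ?_
    have h1 : lnminus (⨅ i, ∑ j, S ω i j) ≤ lnminus (c * ν ω) :=
      lnminus_anti (mul_pos hcpos (hνpos ω)) (key ω)
    have h2 := lnminus_mul_le hcpos (hνpos ω)
    rw [Real.norm_eq_abs, Real.norm_eq_abs, abs_of_nonneg (lnminus_nonneg _),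
      abs_of_nonneg (add_nonneg (lnminus_nonneg _) (lnminus_nonneg _))]
    linarith
  · rintro ⟨hmpos, hmint⟩
    refine ⟨fun _ => 1 / Real.sqrt N, fun i => by positivity, ?_,
      fun ω => ⨅ i, ∑ j, S ω i j, hmmeas, hmpos, hmint, ?_⟩
    · unfold enorm'
      have hs : (0:ℝ) < Real.sqrt N := Real.sqrt_pos.2 (by exact_mod_cast hNpos)
      have : ((1 : ℝ) / Real.sqrt N) ^ 2 = 1 / N := by
        rw [div_pow, one_pow, Real.sq_sqrt (by positivity : (0:ℝ) ≤ (N:ℝ))]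
      rw [Finset.sum_const, this, Finset.card_univ, Fintype.card_fin]
      rw [nsmul_eq_mul, mul_one_div, div_self (by exact_mod_cast hNpos.ne')]
      exact Real.sqrt_one
    · intro ω i
      have h1 : (⨅ i, ∑ j, S ω i j) ≤ ∑ j, S ω i j := ciInf_le (hbdd _) i
      have hs : (0:ℝ) < Real.sqrt N := Real.sqrt_pos.2 (by exact_mod_cast hNpos)
      have h2 : (S ω).mulVec (fun _ => 1 / Real.sqrt N) i
          = (∑ j, S ω i j) * (1 / Real.sqrt N) := by
        rw [Matrix.mulVec, dotProduct, Finset.sum_mul]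
      rw [h2]
      exact mul_le_mul_of_nonneg_right h1 (by positivity)
end

section
/- Assume s_{ij}(ω) > 0 for all ω ∈ Ω and all i, j. Then the following two conditions are equivalent: (a) there exist ē* ∈ X⁺⁺ with ‖ē*‖ = 1 and a measurable function ν* : Ω → (0, ∞) with ω ↦ ln⁻ν*(ω) in L₁(Ω, 𝔉, ℙ) such that S(θ⁻¹ω)ᵀ ē* ≥ ν*(ω)·ē* componentwise for every ω ∈ Ω; (b) m_c(ω) > 0 for every ω and the function ω ↦ ln⁻m_c(ω) belongs to L₁(Ω, 𝔉, ℙ), where m_c(ω) := min_{1≤j≤N} Σ_{i=1}^{N} s_{ij}(ω). -/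
open MeasureTheory Matrix

lemma lnminus_anti_s6 {a b : ℝ} (ha : 0 < a) (hab : a ≤ b) : lnminus b ≤ lnminus a := by
  unfold lnminus
  exact max_le_max (neg_le_neg (Real.log_le_log ha hab)) le_rfl

lemma lnminus_mul_le_s6 {a b : ℝ} (ha : 0 < a) (hb : 0 < b) :
    lnminus (a * b) ≤ lnminus a + lnminus b := by
  unfold lnminus
  rw [Real.log_mul ha.ne' hb.ne', neg_add]
  exact max_le (add_le_add (le_max_left _ _) (le_max_left _ _))
    (by positivity)

/-- Characterization of strong positivity in one direction (B5)*
in terms of the minimal column sum `m_c`. -/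
theorem stmt_6 {N : ℕ} (hN : 2 ≤ N)
    {Ω : Type*} [MeasurableSpace Ω] (ℙ : Measure Ω) [IsProbabilityMeasure ℙ]
    (θ : Equiv.Perm Ω) (hθmeas : Measurable θ) (hθinvmeas : Measurable θ.symm)
    (hθmp : MeasurePreserving θ ℙ ℙ) (hθerg : Ergodic (θ : Ω → Ω) ℙ)
    (S : Ω → Matrix (Fin N) (Fin N) ℝ)
    (hSmeas : ∀ i j, Measurable fun ω => S ω i j)
    (hSpos : ∀ ω i j, 0 < S ω i j) :
    (∃ ebarstar : Fin N → ℝ, (∀ i, 0 < ebarstar i) ∧ enorm' ebarstar = 1 ∧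
      ∃ νstar : Ω → ℝ, Measurable νstar ∧ (∀ ω, 0 < νstar ω) ∧
        Integrable (fun ω => lnminus (νstar ω)) ℙ ∧
        ∀ ω i, νstar ω * ebarstar i ≤ (S (θ.symm ω)).transpose.mulVec ebarstar i)
    ↔
    ((∀ ω, 0 < ⨅ j, ∑ i, S ω i j) ∧
      Integrable (fun ω => lnminus (⨅ j, ∑ i, S ω i j)) ℙ) := by
  have hNpos : 0 < N := lt_of_lt_of_le (by norm_num) hN
  haveI : NeZero N := ⟨hNpos.ne'⟩
  set mc : Ω → ℝ := fun ω => ⨅ j, ∑ i, S ω i j with hmc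
  have hmcpos : ∀ ω, 0 < mc ω := by
    intro ω
    obtain ⟨j, hj⟩ := exists_eq_ciInf_of_finite (f := fun j => ∑ i, S ω i j)
    rw [hmc]
    simp only
    rw [← hj]
    exact Finset.sum_pos (fun i _ => hSpos ω i j) Finset.univ_nonempty
  have hmcmeas : Measurable mc :=
    Measurable.iInf (fun j => Finset.measurable_sum _ (fun i _ => hSmeas i j))
  have hmcle : ∀ ω j, mc ω ≤ ∑ i, S ω i j := fun ω j =>
    ciInf_le (Set.Finite.bddBelow (Set.finite_range _)) j
  -- measurable equiv
  let e : Ω ≃ᵐ Ω := ⟨θ, hθmeas, hθinvmeas⟩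
  have hsymmmp : MeasurePreserving (θ.symm : Ω → Ω) ℙ ℙ :=
    MeasurePreserving.symm e hθmp
  have hlm_meas : Measurable (fun ω => lnminus (mc ω)) := lnminus_measurable.comp hmcmeas
  constructor
  · rintro ⟨eb, hebpos, -, ν, hνmeas, hνpos, hνint, hineq⟩
    refine ⟨hmcpos, ?_⟩
    -- bound: mc (θ.symm ω) ≥ ν ω * (m / M)
    have hne : (Finset.univ : Finset (Fin N)).Nonempty := Finset.univ_nonempty
    set m := Finset.univ.inf' hne eb with hm
    set M := Finset.univ.sup' hne eb with hM
    have hmpos : 0 < m := by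
      obtain ⟨i, -, hi⟩ := Finset.exists_mem_eq_inf' hne eb
      rw [hm, hi]; exact hebpos i
    have hMpos : 0 < M := by
      obtain ⟨i, -, hi⟩ := Finset.exists_mem_eq_sup' hne eb
      rw [hM, hi]; exact hebpos i
    have hkey : ∀ ω, ν ω * (m / M) ≤ mc (θ.symm ω) := by
      intro ω
      refine le_ciInf fun j => ?_
      have h1 : ν ω * eb j ≤ ∑ i, S (θ.symm ω) i j * eb i := by
        have := hineq ω j
        simpa [Matrix.mulVec, Matrix.transpose_apply, dotProduct] using this
      have h2 : ∑ i, S (θ.symm ω) i j * eb i ≤ M * ∑ i, S (θ.symm ω) i j := by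
        rw [Finset.mul_sum]
        refine Finset.sum_le_sum fun i _ => ?_
        rw [mul_comm (M)]
        exact mul_le_mul_of_nonneg_left (Finset.le_sup' eb (Finset.mem_univ i))
          (hSpos _ i j).le
      have h3 : ν ω * m ≤ ν ω * eb j :=
        mul_le_mul_of_nonneg_left (Finset.inf'_le eb (Finset.mem_univ j)) (hνpos ω).le
      have h4 : ν ω * m ≤ M * ∑ i, S (θ.symm ω) i j := le_trans h3 (le_trans h1 h2)
      rw [mul_div_assoc', div_le_iff₀ hMpos]
      linarith [h4]
    -- integrability of lnminus ∘ mc ∘ θ.symm by domination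
    have hintsymm : Integrable (fun ω => lnminus (mc (θ.symm ω))) ℙ := by
      refine Integrable.mono' (g := fun ω => lnminus (ν ω) + lnminus (m / M))
        (hνint.add (integrable_const _))
        ((hlm_meas.comp hθinvmeas).aestronglyMeasurable)
        (Filter.Eventually.of_forall fun ω => ?_)
      rw [Real.norm_of_nonneg (lnminus_nonneg _)]
      calc lnminus (mc (θ.symm ω)) ≤ lnminus (ν ω * (m / M)) :=
            lnminus_anti_s6 (mul_pos (hνpos ω) (div_pos hmpos hMpos)) (hkey ω)
        _ ≤ lnminus (ν ω) + lnminus (m / M) :=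
            lnminus_mul_le_s6 (hνpos ω) (div_pos hmpos hMpos)
    have := (hsymmmp.integrable_comp hlm_meas.aestronglyMeasurable).mp hintsymm
    exact this
  · rintro ⟨-, hint⟩
    refine ⟨fun _ => (Real.sqrt (N : ℝ))⁻¹, fun i => by positivity, ?_, ?_⟩
    · unfold enorm'
      rw [Finset.sum_const, Finset.card_univ, Fintype.card_fin]
      rw [nsmul_eq_mul]
      have hs : (0:ℝ) < Real.sqrt N := Real.sqrt_pos.mpr (by positivity)
      rw [inv_pow, Real.sq_sqrt (by positivity : (0:ℝ) ≤ (N:ℝ))]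
      rw [mul_inv_cancel₀ (by positivity : (N:ℝ) ≠ 0)]
      exact Real.sqrt_one
    · refine ⟨fun ω => mc (θ.symm ω), hmcmeas.comp hθinvmeas,
        fun ω => hmcpos _, ?_, ?_⟩
      · exact (hsymmmp.integrable_comp hlm_meas.aestronglyMeasurable).mpr hint
      · intro ω j
        have h1 : mc (θ.symm ω) ≤ ∑ i, S (θ.symm ω) i j := hmcle _ j
        have h2 : (0:ℝ) ≤ (Real.sqrt (N:ℝ))⁻¹ := by positivity
        simp only [Matrix.mulVec, Matrix.transpose_apply, dotProduct, ← Finset.sum_mul]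
        exact mul_le_mul_of_nonneg_right h1 h2
end

section
/- Assume s_{ij}(ω) ≥ 0 for all ω, i, j, that ω ↦ ln⁺M(ω) belongs to L₁(Ω, 𝔉, ℙ) where M(ω) := max_{i,j} s_{ij}(ω), and that S(ω)(X⁺ ∖ {0}) ⊆ X⁺ ∖ {0} for every ω ∈ Ω. Then for every ω ∈ Ω there exists an entire positive orbit, i.e. a map v : ℤ → X⁺ ∖ {0} such that v(n+1) = S(θⁿω) v(n) for every n ∈ ℤ. -/
open MeasureTheory Matrix

/-- Existence of an entire positive orbit for a positive matrix cocycle. -/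
theorem stmt_7 {N : ℕ} (hN : 2 ≤ N)
    {Ω : Type*} [MeasurableSpace Ω] (ℙ : Measure Ω) [IsProbabilityMeasure ℙ]
    (θ : Equiv.Perm Ω) (hθmeas : Measurable θ) (hθinvmeas : Measurable θ.symm)
    (hθmp : MeasurePreserving θ ℙ ℙ) (hθerg : Ergodic (θ : Ω → Ω) ℙ)
    (S : Ω → Matrix (Fin N) (Fin N) ℝ)
    (hSmeas : ∀ i j, Measurable fun ω => S ω i j)
    (hSnonneg : ∀ ω i j, 0 ≤ S ω i j)
    (hint : Integrable (fun ω => lnplus (⨆ i, ⨆ j, S ω i j)) ℙ)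
    (hSpos : ∀ ω, ∀ u : Fin N → ℝ, (∀ i, 0 ≤ u i) → u ≠ 0 →
      (∀ i, 0 ≤ (S ω).mulVec u i) ∧ (S ω).mulVec u ≠ 0) :
    ∀ ω : Ω, ∃ v : ℤ → Fin N → ℝ,
      (∀ n : ℤ, (∀ i, 0 ≤ v n i) ∧ v n ≠ 0) ∧
      (∀ n : ℤ, v (n + 1) = (S ((θ ^ n) ω)).mulVec (v n)) := by
  intro ω
  -- notation
  set T : ℤ → Matrix (Fin N) (Fin N) ℝ := fun n => S ((θ ^ n) ω) with hT
  set Δ : Set (Fin N → ℝ) := stdSimplex ℝ (Fin N) with hΔ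
  have hNpos : (0:ℝ) < N := by positivity
  -- key positivity of the normalization factor
  have hne0 : ∀ u : Fin N → ℝ, u ∈ Δ → u ≠ 0 := by
    intro u hu h0
    have h1 := hu.2
    rw [h0] at h1
    simp only [Pi.zero_apply, Finset.sum_const_zero] at h1
    exact zero_ne_one h1
  have hlam : ∀ (n : ℤ) (u : Fin N → ℝ), u ∈ Δ → 0 < ∑ i, (T n).mulVec u i := by
    intro n u hu
    obtain ⟨hnn, hne⟩ := hSpos ((θ ^ n) ω) u hu.1 (hne0 u hu)
    rcases (Finset.sum_nonneg fun i _ => hnn i).lt_or_eq with h | h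
    · exact h
    · exfalso
      apply hne
      funext i
      exact (Finset.sum_eq_zero_iff_of_nonneg fun j _ => hnn j).mp h.symm i (Finset.mem_univ i)
  -- the projective maps
  set g : ℤ → (Fin N → ℝ) → (Fin N → ℝ) :=
    fun n u => (∑ i, (T n).mulVec u i)⁻¹ • (T n).mulVec u with hg
  have hgmem : ∀ (n : ℤ) (u : Fin N → ℝ), u ∈ Δ → g n u ∈ Δ := by
    intro n u hu
    obtain ⟨hnn, -⟩ := hSpos ((θ ^ n) ω) u hu.1 (hne0 u hu)
    have hl := hlam n u hu
    constructor
    · intro i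
      exact mul_nonneg (inv_nonneg.mpr hl.le) (hnn i)
    · have : ∑ i, ((∑ i, (T n).mulVec u i)⁻¹ • (T n).mulVec u) i = 1 := by
        simp only [Pi.smul_apply, smul_eq_mul, ← Finset.mul_sum]
        exact inv_mul_cancel₀ hl.ne'
      exact this
  -- continuity of mulVec
  have hcont : ∀ n : ℤ, Continuous fun u : Fin N → ℝ => (T n).mulVec u := by
    intro n
    have := LinearMap.continuous_of_finiteDimensional (Matrix.mulVecLin (T n))
    exact this
  -- the compact product space and the closed constraint sets
  set K : Set (ℤ → Fin N → ℝ) := Set.pi Set.univ fun _ => Δ with hK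
  have hKcomp : IsCompact K := isCompact_univ_pi fun _ => isCompact_stdSimplex _ _
  have hKcl : IsClosed K := isClosed_set_pi fun _ _ => isClosed_stdSimplex _ _
  set C : ℤ → Set (ℤ → Fin N → ℝ) :=
    fun n => {w | (∑ i, (T n).mulVec (w n) i) • w (n + 1) = (T n).mulVec (w n)} with hC
  have hCcl : ∀ n, IsClosed (C n) := by
    intro n
    have c1 : Continuous fun w : ℤ → Fin N → ℝ => (T n).mulVec (w n) :=
      (hcont n).comp (continuous_apply n)
    apply isClosed_eq
    · exact (continuous_finset_sum _ fun i _ => (continuous_apply i).comp c1).smul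
        (continuous_apply (n + 1))
    · exact c1
  set A : ℕ → Set (ℤ → Fin N → ℝ) :=
    fun m => K ∩ ⋂ (n : ℤ), ⋂ (_ : -(m:ℤ) ≤ n), C n with hA
  have hAcl : ∀ m, IsClosed (A m) :=
    fun m => hKcl.inter (isClosed_iInter fun n => isClosed_iInter fun _ => hCcl n)
  have hAmono : ∀ m, A (m + 1) ⊆ A m := by
    intro m w hw
    refine ⟨hw.1, ?_⟩
    refine Set.mem_iInter.mpr fun n => Set.mem_iInter.mpr fun hn => ?_
    have : -((m:ℤ) + 1) ≤ n := by omega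
    exact Set.mem_iInter.mp (Set.mem_iInter.mp hw.2 n) (by exact_mod_cast this)
  -- nonemptiness of each A m
  have hAne : ∀ m, (A m).Nonempty := by
    intro m
    set e : Fin N → ℝ := fun _ => (N:ℝ)⁻¹ with he
    have heΔ : e ∈ Δ := by
      constructor
      · intro i; positivity
      · simp [he, Finset.sum_const, Finset.card_univ]
        field_simp
    set h : ℕ → Fin N → ℝ := fun k => Nat.rec e (fun k' hk => g (-(m:ℤ) + k') hk) k with hh
    have hhΔ : ∀ k, h k ∈ Δ := by
      intro k
      induction k with
      | zero => exact heΔ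
      | succ k ih => exact hgmem _ _ ih
    set w : ℤ → Fin N → ℝ := fun n => if -(m:ℤ) ≤ n then h (n + m).toNat else e with hw
    refine ⟨w, ?_, ?_⟩
    · intro n _
      by_cases hn : -(m:ℤ) ≤ n <;> simp only [hw, hn, if_true, if_false] <;>
        first | exact hhΔ _ | exact heΔ
    · refine Set.mem_iInter.mpr fun n => Set.mem_iInter.mpr fun hn => ?_
      have hn1 : -(m:ℤ) ≤ n + 1 := by omega
      have hwn : w n = h (n + m).toNat := by simp [hw, hn]
      have hwn1 : w (n + 1) = h ((n + m).toNat + 1) := by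
        have : (n + 1 + m).toNat = (n + m).toNat + 1 := by omega
        simp [hw, hn1, this]
      have hidx : -(m:ℤ) + ((n + m).toNat : ℤ) = n := by omega
      have hstep : w (n + 1) = g n (w n) := by
        rw [hwn1, hwn]
        show g (-(m:ℤ) + ((n + m).toNat : ℤ)) (h (n + m).toNat) = g n (h (n + m).toNat)
        rw [hidx]
      show (∑ i, (T n).mulVec (w n) i) • w (n + 1) = (T n).mulVec (w n)
      rw [hstep]
      have hl := hlam n (w n) (by rw [hwn]; exact hhΔ _)
      simp only [hg]
      rw [smul_smul, mul_inv_cancel₀ hl.ne', one_smul]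
  -- take a point in the intersection
  obtain ⟨w, hwmem⟩ := IsCompact.nonempty_iInter_of_sequence_nonempty_isCompact_isClosed A
    hAmono hAne (hKcomp.of_isClosed_subset (hAcl 0) Set.inter_subset_left) hAcl
  have hwΔ : ∀ n, w n ∈ Δ := fun n =>
    (Set.mem_iInter.mp hwmem 0).1 n (Set.mem_univ n)
  have hwC : ∀ n : ℤ, (∑ i, (T n).mulVec (w n) i) • w (n + 1) = (T n).mulVec (w n) := by
    intro n
    have hm : -((n.natAbs : ℕ) : ℤ) ≤ n := by omega
    exact Set.mem_iInter.mp (Set.mem_iInter.mp (Set.mem_iInter.mp hwmem n.natAbs).2 n) hm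
  -- the scaling factors
  set lam : ℤ → ℝ := fun n => ∑ i, (T n).mulVec (w n) i with hlamdef
  have hlampos : ∀ n, 0 < lam n := fun n => hlam n (w n) (hwΔ n)
  set c : ℤ → ℝ := fun n =>
    if 0 ≤ n then ∏ j ∈ Finset.range n.toNat, lam j
    else (∏ j ∈ Finset.range (-n).toNat, lam (-(j + 1 : ℕ)))⁻¹ with hc
  have hcpos : ∀ n, 0 < c n := by
    intro n
    by_cases hn : 0 ≤ n <;> simp only [hc, hn, if_true, if_false]
    · exact Finset.prod_pos fun j _ => hlampos _
    · exact inv_pos.mpr (Finset.prod_pos fun j _ => hlampos _)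
  have hcrec : ∀ n : ℤ, c (n + 1) = lam n * c n := by
    intro n
    rcases lt_trichotomy n (-1) with hn | hn | hn
    · have h0 : ¬ (0 ≤ n + 1) := by omega
      have h1 : ¬ (0 ≤ n) := by omega
      have h2 : (-n).toNat = (-(n + 1)).toNat + 1 := by omega
      simp only [hc, h0, h1, if_false, h2, Finset.prod_range_succ]
      have h3 : (-((((-(n + 1)).toNat + 1 : ℕ)) : ℤ)) = n := by omega
      rw [h3, mul_inv, mul_left_comm, mul_inv_cancel₀ (hlampos n).ne', mul_one]
    · subst hn
      have : (-(-1:ℤ)).toNat = 1 := by norm_num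
      simp only [hc]
      norm_num
      rw [mul_inv_cancel₀ (hlampos (-1)).ne']
    · have h0 : (0:ℤ) ≤ n := by omega
      have h1 : (0:ℤ) ≤ n + 1 := by omega
      have h2 : (n + 1).toNat = n.toNat + 1 := by omega
      simp only [hc, h0, h1, if_true, h2, Finset.prod_range_succ]
      have h3 : ((n.toNat : ℕ) : ℤ) = n := by omega
      rw [h3, mul_comm]
  -- the entire orbit
  refine ⟨fun n => c n • w n, fun n => ⟨?_, ?_⟩, fun n => ?_⟩
  · intro i
    exact mul_nonneg (hcpos n).le ((hwΔ n).1 i)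
  · exact smul_ne_zero (hcpos n).ne' (hne0 (w n) (hwΔ n))
  · show c (n + 1) • w (n + 1) = (T n).mulVec (c n • w n)
    rw [hcrec n, Matrix.mulVec_smul, ← hwC n, smul_smul, mul_comm (lam n) (c n)]
end

section
/- Assume the type-K monotonicity condition: there are integers k, l ≥ 1 with k + l = N such that for every ω, b_{ij}(ω) ≥ 0 whenever i ≠ j and either i, j ∈ {1,…,k} or i, j ∈ {k+1,…,N}, and b_{ij}(ω) ≤ 0 whenever i ∈ {1,…,k}, j ∈ {k+1,…,N} or i ∈ {k+1,…,N}, j ∈ {1,…,k}; assume also ω ↦ max_{i,j} |b_{ij}(ω)| ∈ L₁(ℙ). Then for every ω ∈ Ω there exists a nontrivial entire positive solution with respect to the type-K cone, i.e. a continuous function v : ℝ → K̃ with v(t) ≠ 0 for all t, such that v(t) = v(s) + ∫_s^t B(θ_τ ω) v(τ) dτ for all s ≤ t in ℝ, where K̃ := {u ∈ ℝᴺ : u_i ≥ 0 for i = 1,…,k and u_i ≤ 0 for i = k+1,…,N}. -/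
open MeasureTheory Matrix Filter

/-- The operator norm of a matrix with respect to the Euclidean norm. -/
noncomputable def eopNorm {N : ℕ} (M : Matrix (Fin N) (Fin N) ℝ) : ℝ :=
  sSup {c : ℝ | ∃ u : Fin N → ℝ, enorm' u ≤ 1 ∧ c = enorm' (M.mulVec u)}


open MeasureTheory Matrix Filter Set intervalIntegral

section ODE
variable {d : ℕ}

lemma mulVec_norm_le (M : Matrix (Fin d) (Fin d) ℝ) {C : ℝ} (hC : 0 ≤ C)
    (h : ∀ i j, |M i j| ≤ C) (u : Fin d → ℝ) :
    ‖M.mulVec u‖ ≤ (d * C) * ‖u‖ := by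
  rw [pi_norm_le_iff_of_nonneg (by positivity)]
  intro i
  have he : M.mulVec u i = ∑ j, M i j * u j := rfl
  rw [Real.norm_eq_abs, he]
  calc |∑ j, M i j * u j| ≤ ∑ j, |M i j * u j| := Finset.abs_sum_le_sum_abs _ _
    _ ≤ ∑ _j : Fin d, C * ‖u‖ := by
        refine Finset.sum_le_sum fun j _ => ?_
        rw [abs_mul]
        exact mul_le_mul (h i j) (norm_le_pi_norm u j) (abs_nonneg _) hC
    _ = (d * C) * ‖u‖ := by
        rw [Finset.sum_const, Finset.card_univ, Fintype.card_fin, nsmul_eq_mul]; ring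

structure GoodCoeff (A : ℝ → Matrix (Fin d) (Fin d) ℝ) (c : ℝ → ℝ) : Prop where
  meas : ∀ i j, Measurable fun t => A t i j
  cint : ∀ a b : ℝ, IntervalIntegrable c volume a b
  c0 : ∀ t, 0 ≤ c t
  bound : ∀ t i j, |A t i j| ≤ c t

namespace GoodCoeff

variable {A : ℝ → Matrix (Fin d) (Fin d) ℝ} {c : ℝ → ℝ} (hA : GoodCoeff A c)
include hA

lemma normBound (t : ℝ) (u : Fin d → ℝ) : ‖(A t).mulVec u‖ ≤ (d * c t) * ‖u‖ :=
  mulVec_norm_le _ (hA.c0 t) (hA.bound t) u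

lemma meas_mulVec {w : ℝ → Fin d → ℝ} (hw : Measurable w) :
    Measurable fun τ => (A τ).mulVec (w τ) := by
  apply measurable_pi_lambda
  intro i
  have he : (fun τ => (A τ).mulVec (w τ) i) = fun τ => ∑ j, A τ i j * w τ j := rfl
  rw [he]
  exact Finset.measurable_sum _ fun j _ => (hA.meas i j).mul ((measurable_pi_apply j).comp hw)

lemma intInt {w : ℝ → Fin d → ℝ} (hw : Continuous w) (a b : ℝ) :
    IntervalIntegrable (fun τ => (A τ).mulVec (w τ)) volume a b := by
  obtain ⟨Mw, hMw⟩ : ∃ Mw, ∀ x ∈ Set.uIcc a b, ‖w x‖ ≤ Mw :=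
    isCompact_uIcc.exists_bound_of_continuousOn hw.continuousOn
  refine IntervalIntegrable.mono_fun' (g := fun τ => (d * max Mw 0) * c τ)
    (((hA.cint a b).const_mul _)) ?_ ?_
  · exact (hA.meas_mulVec hw.measurable).aestronglyMeasurable
  · refine (ae_restrict_iff' measurableSet_uIoc).2 (ae_of_all _ fun τ hτ => ?_)
    have h1 : ‖(A τ).mulVec (w τ)‖ ≤ (d * c τ) * ‖w τ‖ := hA.normBound τ (w τ)
    have h2 : ‖w τ‖ ≤ max Mw 0 :=
      le_trans (hMw τ (uIoc_subset_uIcc hτ)) (le_max_left _ _)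
    show ‖(A τ).mulVec (w τ)‖ ≤ (d * max Mw 0) * c τ
    calc ‖(A τ).mulVec (w τ)‖ ≤ (d * c τ) * max Mw 0 :=
          h1.trans (mul_le_mul_of_nonneg_left h2
            (mul_nonneg (by positivity) (hA.c0 τ)))
      _ = (d * max Mw 0) * c τ := by ring

lemma intInt_comp {w : ℝ → Fin d → ℝ} (hw : Continuous w) (a b : ℝ) (i : Fin d) :
    IntervalIntegrable (fun τ => (A τ).mulVec (w τ) i) volume a b := by
  refine IntervalIntegrable.mono_fun (hA.intInt hw a b) ?_ ?_
  · exact ((measurable_pi_apply i).comp (hA.meas_mulVec hw.measurable)).aestronglyMeasurable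
  · exact ae_of_all _ fun τ => norm_le_pi_norm _ i

end GoodCoeff

lemma intervalIntegral_apply {f : ℝ → Fin d → ℝ} {a b : ℝ}
    (hf : IntervalIntegrable f volume a b) (i : Fin d) :
    (∫ τ in a..b, f τ) i = ∫ τ in a..b, f τ i := by
  have := (ContinuousLinearMap.proj (R := ℝ) (φ := fun _ : Fin d => ℝ) i).intervalIntegral_comp_comm hf
  simpa using this.symm



lemma gronwall_zero (g φ : ℝ → ℝ) (hg : ∀ a b : ℝ, IntervalIntegrable g volume a b)
    (hg0 : ∀ t, 0 ≤ g t) (hφ : Continuous φ) (a b : ℝ) (hab : a ≤ b)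
    (hφ0 : ∀ t ∈ Icc a b, 0 ≤ φ t)
    (hle : ∀ t ∈ Icc a b, φ t ≤ ∫ τ in a..t, g τ * φ τ) :
    ∀ t ∈ Icc a b, φ t = 0 := by
  have hgφ : ∀ a' b' : ℝ, IntervalIntegrable (fun τ => g τ * φ τ) volume a' b' :=
    fun a' b' => (hg a' b').mul_continuousOn hφ.continuousOn
  set S : Set ℝ := {r | r ∈ Icc a b ∧ ∀ t ∈ Icc a r, φ t = 0} with hS
  have haS : a ∈ S := by
    refine ⟨⟨le_refl a, hab⟩, fun t ht => ?_⟩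
    have : t = a := le_antisymm ht.2 ht.1
    subst this
    have h1 := hle t ⟨le_refl t, hab⟩
    rw [intervalIntegral.integral_same] at h1
    exact le_antisymm h1 (hφ0 t ⟨le_refl t, hab⟩)
  have hSne : S.Nonempty := ⟨a, haS⟩
  have hSbdd : BddAbove S := ⟨b, fun r hr => hr.1.2⟩
  set r0 := sSup S with hr0
  have har0 : a ≤ r0 := le_csSup hSbdd haS
  have hr0b : r0 ≤ b := csSup_le hSne fun r hr => hr.1.2
  -- φ = 0 on Icc a r0
  have hIco : ∀ s ∈ Ico a r0, φ s = 0 := by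
    intro s hs
    obtain ⟨r, hrS, hsr⟩ := exists_lt_of_lt_csSup hSne hs.2
    exact hrS.2 s ⟨hs.1, le_of_lt hsr⟩
  have hφr0 : φ r0 = 0 := by
    rcases eq_or_lt_of_le har0 with h' | h'
    · rw [← h']; exact haS.2 a ⟨le_refl a, le_refl a⟩
    · have hEq : EqOn φ 0 (Ico a r0) := fun s hs => hIco s hs
      have hcl : EqOn φ 0 (closure (Ico a r0)) := hEq.closure hφ continuous_const
      have hmem : r0 ∈ closure (Ico a r0) := by
        rw [closure_Ico (ne_of_lt h')]
        exact ⟨le_of_lt h', le_refl r0⟩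
      exact hcl hmem
  have hzero : ∀ t ∈ Icc a r0, φ t = 0 := by
    intro t ht
    rcases eq_or_lt_of_le ht.2 with h | h
    · rw [h]; exact hφr0
    · exact hIco t ⟨ht.1, h⟩
  -- show r0 = b
  have hr0_eq : r0 = b := by
    by_contra hne
    have hlt : r0 < b := lt_of_le_of_ne hr0b hne
    -- continuity of the primitive at r0
    have hGcont : Continuous fun r => ∫ τ in r0..r, g τ := intervalIntegral.continuous_primitive hg r0
    have hG0 : (∫ τ in r0..r0, g τ) = 0 := intervalIntegral.integral_same
    have hev : ∀ᶠ r in nhds r0, |∫ τ in r0..r, g τ| < 1/4 := by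
      have : Tendsto (fun r => |∫ τ in r0..r, g τ|) (nhds r0) (nhds 0) := by
        have h1 : Tendsto (fun r => ∫ τ in r0..r, g τ) (nhds r0) (nhds 0) := by
          have := hGcont.tendsto r0
          rwa [hG0] at this
        simpa using h1.abs
      exact this.eventually_lt_const (by norm_num)
    obtain ⟨δ, hδ0, hδ⟩ := Metric.eventually_nhds_iff.1 hev
    set β := min (r0 + δ/2) b with hβ
    have hr0β : r0 < β := lt_min (by linarith) hlt
    have hβb : β ≤ b := min_le_right _ _
    have hβle : β ≤ r0 + δ/2 := min_le_left _ _
    have hβδ : |β - r0| < δ := by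
      rw [abs_lt]
      exact ⟨by linarith, by linarith⟩
    -- max of φ on [r0, β]
    obtain ⟨t1, ht1, hmax⟩ := isCompact_Icc.exists_isMaxOn (nonempty_Icc.2 (le_of_lt hr0β))
      (hφ.continuousOn (s := Icc r0 β))
    have ht1ab : t1 ∈ Icc a b := ⟨har0.trans ht1.1, ht1.2.trans hβb⟩
    have hkey : φ t1 ≤ (1/2) * φ t1 := by
      have h1 : φ t1 ≤ ∫ τ in a..t1, g τ * φ τ := hle t1 ht1ab
      have hsplit : (∫ τ in a..t1, g τ * φ τ)
          = (∫ τ in a..r0, g τ * φ τ) + ∫ τ in r0..t1, g τ * φ τ :=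
        (intervalIntegral.integral_add_adjacent_intervals (hgφ a r0) (hgφ r0 t1)).symm
      have hz : (∫ τ in a..r0, g τ * φ τ) = 0 := by
        have : EqOn (fun τ => g τ * φ τ) (fun _ => (0:ℝ)) (uIcc a r0) := by
          intro τ hτ
          rw [uIcc_of_le har0] at hτ
          simp [hzero τ hτ]
        rw [intervalIntegral.integral_congr this]
        simp
      have h2 : (∫ τ in r0..t1, g τ * φ τ) ≤ ∫ τ in r0..t1, g τ * φ t1 := by
        refine intervalIntegral.integral_mono_on ht1.1 (hgφ r0 t1)
          (((hg r0 t1).mul_const _)) fun τ hτ => ?_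
        refine mul_le_mul_of_nonneg_left ?_ (hg0 τ)
        exact hmax ⟨hτ.1, hτ.2.trans ht1.2⟩
      have h3 : (∫ τ in r0..t1, g τ * φ t1) = (∫ τ in r0..t1, g τ) * φ t1 := by
        rw [intervalIntegral.integral_mul_const]
      have h4 : (∫ τ in r0..t1, g τ) ≤ 1/2 := by
        have habs : |∫ τ in r0..t1, g τ| < 1/4 := by
          apply hδ
          rw [Real.dist_eq, abs_lt]
          have h5 := ht1.1
          have h6 := ht1.2
          exact ⟨by linarith, by linarith⟩
        nlinarith [abs_nonneg (∫ τ in r0..t1, g τ), le_abs_self (∫ τ in r0..t1, g τ)]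
      have hφt10 : 0 ≤ φ t1 := hφ0 t1 ht1ab
      calc φ t1 ≤ ∫ τ in a..t1, g τ * φ τ := h1
        _ = (∫ τ in r0..t1, g τ * φ τ) := by rw [hsplit, hz, zero_add]
        _ ≤ (∫ τ in r0..t1, g τ) * φ t1 := h2.trans (le_of_eq h3)
        _ ≤ (1/2) * φ t1 := mul_le_mul_of_nonneg_right h4 hφt10
    have hφt1 : φ t1 = 0 := by
      have h0 : 0 ≤ φ t1 := hφ0 t1 ht1ab
      linarith
    -- then β ∈ S, contradiction
    have hβS : β ∈ S := by
      refine ⟨⟨har0.trans (le_of_lt hr0β), hβb⟩, fun t ht => ?_⟩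
      rcases le_or_gt t r0 with h' | h'
      · exact hzero t ⟨ht.1, h'⟩
      · have : φ t ≤ φ t1 := hmax ⟨le_of_lt h', ht.2⟩
        have h0 : 0 ≤ φ t := hφ0 t ⟨ht.1, ht.2.trans hβb⟩
        linarith [hφt1]
    have : β ≤ r0 := le_csSup hSbdd hβS
    linarith
  intro t ht
  exact hzero t ⟨ht.1, by rw [hr0_eq]; exact ht.2⟩

-- helper: bound |∫ f| by ∫ over enclosing interval of a dominating nonneg g
lemma abs_intervalIntegral_le {f g : ℝ → ℝ} {α β t0 x : ℝ}
    (ht0 : t0 ∈ Icc α β) (hx : x ∈ Icc α β)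
    (hf : ∀ a b : ℝ, IntervalIntegrable f volume a b)
    (hg : ∀ a b : ℝ, IntervalIntegrable g volume a b)
    (h0 : ∀ τ, 0 ≤ f τ) (hfg : ∀ τ, f τ ≤ g τ) :
    |∫ τ in t0..x, f τ| ≤ ∫ τ in α..β, g τ := by
  have hg0 : ∀ τ, 0 ≤ g τ := fun τ => (h0 τ).trans (hfg τ)
  have key : ∀ u v : ℝ, u ≤ v → u ∈ Icc α β → v ∈ Icc α β →
      |∫ τ in u..v, f τ| ≤ ∫ τ in α..β, g τ := by
    intro u v huv hu hv
    have h1 : (0:ℝ) ≤ ∫ τ in u..v, f τ :=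
      intervalIntegral.integral_nonneg huv fun τ _ => h0 τ
    rw [abs_of_nonneg h1]
    calc (∫ τ in u..v, f τ) ≤ ∫ τ in u..v, g τ :=
          intervalIntegral.integral_mono_on huv (hf u v) (hg u v) fun τ _ => hfg τ
      _ ≤ ∫ τ in α..β, g τ :=
          intervalIntegral.integral_mono_interval hu.1 huv hv.2
            (ae_of_all _ fun τ => hg0 τ) (hg α β)
  rcases le_total t0 x with h | h
  · exact key t0 x h ht0 hx
  · rw [intervalIntegral.integral_symm, abs_neg]
    exact key x t0 h hx ht0

namespace GoodCoeff
variable {d : ℕ} {A : ℝ → Matrix (Fin d) (Fin d) ℝ} {c : ℝ → ℝ} (hA : GoodCoeff A c)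
include hA

lemma exists_local {α β t0 : ℝ} (ht0 : t0 ∈ Icc α β)
    (hsmall : (∫ τ in α..β, (d:ℝ) * c τ) ≤ 1/2) (v0 : Fin d → ℝ) :
    ∃ w : ℝ → Fin d → ℝ, Continuous w ∧
      ∀ t ∈ Icc α β, w t = v0 + ∫ τ in t0..t, (A τ).mulVec (w τ) := by
  have hαβ : α ≤ β := ht0.1.trans ht0.2
  have hEcont : ∀ f : C(Icc α β, Fin d → ℝ), Continuous (IccExtend hαβ f) :=
    fun f => f.continuous.Icc_extend'
  have hInt : ∀ (f : C(Icc α β, Fin d → ℝ)) (a b : ℝ),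
      IntervalIntegrable (fun τ => (A τ).mulVec (IccExtend hαβ f τ)) volume a b :=
    fun f a b => hA.intInt (hEcont f) a b
  set T : C(Icc α β, Fin d → ℝ) → C(Icc α β, Fin d → ℝ) := fun f =>
    ⟨fun t => v0 + ∫ τ in t0..(t:ℝ), (A τ).mulVec (IccExtend hαβ f τ),
      (continuous_const.add
        ((intervalIntegral.continuous_primitive (hInt f) t0))).comp continuous_subtype_val⟩
    with hT
  have hdist : ∀ f g : C(Icc α β, Fin d → ℝ), dist (T f) (T g) ≤ (1/2) * dist f g := by
    intro f g
    have hD0 : (0:ℝ) ≤ dist f g := dist_nonneg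
    rw [ContinuousMap.dist_le (by positivity)]
    intro x
    have hsub : ∀ τ : ℝ, (A τ).mulVec (IccExtend hαβ f τ) - (A τ).mulVec (IccExtend hαβ g τ)
        = (A τ).mulVec (IccExtend hαβ f τ - IccExtend hαβ g τ) :=
      fun τ => (Matrix.mulVec_sub _ _ _).symm
    have heq : dist (T f x) (T g x)
        = ‖∫ τ in t0..(x:ℝ), (A τ).mulVec (IccExtend hαβ f τ - IccExtend hαβ g τ)‖ := by
      rw [dist_eq_norm]
      have : T f x - T g x = ∫ τ in t0..(x:ℝ),
          (A τ).mulVec (IccExtend hαβ f τ - IccExtend hαβ g τ) := by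
        show (v0 + _) - (v0 + _) = _
        rw [add_sub_add_left_eq_sub, ← intervalIntegral.integral_sub (hInt f _ _) (hInt g _ _)]
        congr 1
        funext τ
        exact hsub τ
      rw [this]
    rw [heq]
    have hptle : ∀ τ : ℝ, ‖(A τ).mulVec (IccExtend hαβ f τ - IccExtend hαβ g τ)‖
        ≤ (d * c τ) * dist f g := by
      intro τ
      refine (hA.normBound τ _).trans ?_
      refine mul_le_mul_of_nonneg_left ?_ (mul_nonneg (by positivity) (hA.c0 τ))
      have : IccExtend hαβ f τ - IccExtend hαβ g τ
          = f (projIcc α β hαβ τ) - g (projIcc α β hαβ τ) := rfl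
      rw [this, ← dist_eq_norm]
      exact ContinuousMap.dist_apply_le_dist _
    calc ‖∫ τ in t0..(x:ℝ), (A τ).mulVec (IccExtend hαβ f τ - IccExtend hαβ g τ)‖
        ≤ |∫ τ in t0..(x:ℝ), ‖(A τ).mulVec (IccExtend hαβ f τ - IccExtend hαβ g τ)‖| :=
          intervalIntegral.norm_integral_le_abs_integral_norm
      _ ≤ ∫ τ in α..β, ((d:ℝ) * c τ) * dist f g := by
          refine abs_intervalIntegral_le ht0 x.2 (fun a b => (hA.intInt ((hEcont f).sub (hEcont g)) a b).norm)
            (fun a b => ((hA.cint a b).const_mul _).mul_const _) (fun τ => norm_nonneg _) hptle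
      _ = (∫ τ in α..β, (d:ℝ) * c τ) * dist f g := intervalIntegral.integral_mul_const _ _
      _ ≤ (1/2) * dist f g := mul_le_mul_of_nonneg_right hsmall hD0
  have hcontr : ContractingWith (1/2 : NNReal) T := by
    constructor
    · rw [← NNReal.coe_lt_coe]; norm_num
    · refine LipschitzWith.of_dist_le_mul fun f g => ?_
      have : ((1/2 : NNReal) : ℝ) = (1/2 : ℝ) := by norm_num
      rw [this]
      exact hdist f g
  have : Nonempty C(Icc α β, Fin d → ℝ) := ⟨ContinuousMap.const _ 0⟩
  set f0 := hcontr.fixedPoint T with hf0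
  have hfix : T f0 = f0 := hcontr.fixedPoint_isFixedPt
  refine ⟨IccExtend hαβ f0, hEcont f0, fun t ht => ?_⟩
  have h1 : IccExtend hαβ f0 t = f0 ⟨t, ht⟩ := IccExtend_of_mem hαβ f0 ht
  have h2 : (T f0) ⟨t, ht⟩ = f0 ⟨t, ht⟩ := by rw [hfix]
  rw [h1, ← h2]
  rfl

end GoodCoeff

lemma integral_reverse {d : ℕ} (f : ℝ → Fin d → ℝ) (t0 t : ℝ) :
    (∫ τ in t0..(2*t0 - t), f τ) = ∫ τ in t0..t, -f (2*t0 - τ) := by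
  have h1 : (∫ x in t0..t, f (2*t0 - x)) = ∫ x in (2*t0 - t)..(2*t0 - t0), f x :=
    intervalIntegral.integral_comp_sub_left f (2*t0)
  have h2 : 2*t0 - t0 = t0 := by ring
  rw [h2] at h1
  rw [intervalIntegral.integral_neg, h1, intervalIntegral.integral_symm]

namespace GoodCoeff
variable {d : ℕ} {A : ℝ → Matrix (Fin d) (Fin d) ℝ} {c : ℝ → ℝ} (hA : GoodCoeff A c)
include hA

lemma reverse (t0 : ℝ) :
    GoodCoeff (fun t => -A (2*t0 - t)) (fun t => c (2*t0 - t)) := by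
  constructor
  · intro i j
    have : (fun t => (-A (2*t0 - t)) i j) = fun t => -(A (2*t0 - t) i j) := rfl
    rw [this]
    exact ((hA.meas i j).comp (measurable_const.sub measurable_id)).neg
  · intro a b
    have h := (hA.cint (2*t0 - a) (2*t0 - b)).comp_sub_left (2*t0)
    have e1 : 2*t0 - (2*t0 - a) = a := by ring
    have e2 : 2*t0 - (2*t0 - b) = b := by ring
    rwa [e1, e2] at h
  · intro t; exact hA.c0 _
  · intro t i j
    have : (-A (2*t0 - t)) i j = -(A (2*t0 - t) i j) := rfl
    rw [this, abs_neg]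
    exact hA.bound _ i j

lemma uniq_fwd {u w : ℝ → Fin d → ℝ} (hu : Continuous u) (hw : Continuous w)
    {t0 b : ℝ} (htb : t0 ≤ b)
    (hue : ∀ t ∈ Icc t0 b, u t = u t0 + ∫ τ in t0..t, (A τ).mulVec (u τ))
    (hwe : ∀ t ∈ Icc t0 b, w t = w t0 + ∫ τ in t0..t, (A τ).mulVec (w τ))
    (h0 : u t0 = w t0) : ∀ t ∈ Icc t0 b, u t = w t := by
  have hφc : Continuous fun t => ‖u t - w t‖ := (hu.sub hw).norm
  have key : ∀ t ∈ Icc t0 b, ‖u t - w t‖ = 0 := by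
    refine gronwall_zero (fun τ => (d:ℝ) * c τ) _ (fun a' b' => (hA.cint a' b').const_mul _)
      (fun τ => mul_nonneg (by positivity) (hA.c0 τ)) hφc t0 b htb
      (fun t _ => norm_nonneg _) ?_
    intro t ht
    have hsub : u t - w t = ∫ τ in t0..t, (A τ).mulVec (u τ - w τ) := by
      rw [hue t ht, hwe t ht, h0, add_sub_add_left_eq_sub,
        ← intervalIntegral.integral_sub (hA.intInt hu t0 t) (hA.intInt hw t0 t)]
      congr 1
      funext τ
      exact (Matrix.mulVec_sub _ _ _).symm
    rw [hsub]
    calc ‖∫ τ in t0..t, (A τ).mulVec (u τ - w τ)‖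
        ≤ ∫ τ in t0..t, ‖(A τ).mulVec (u τ - w τ)‖ :=
          intervalIntegral.norm_integral_le_integral_norm ht.1
      _ ≤ ∫ τ in t0..t, ((d:ℝ) * c τ) * ‖u τ - w τ‖ := by
          refine intervalIntegral.integral_mono_on ht.1
            ((hA.intInt (hu.sub hw) t0 t).norm)
            (((hA.cint t0 t).const_mul _).mul_continuousOn hφc.continuousOn)
            fun τ _ => hA.normBound τ _
  intro t ht
  have := key t ht
  rwa [norm_eq_zero, sub_eq_zero] at this

lemma uniq_icc {u w : ℝ → Fin d → ℝ} (hu : Continuous u) (hw : Continuous w)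
    {a b t0 : ℝ} (ht0 : t0 ∈ Icc a b)
    (hue : ∀ t ∈ Icc a b, u t = u t0 + ∫ τ in t0..t, (A τ).mulVec (u τ))
    (hwe : ∀ t ∈ Icc a b, w t = w t0 + ∫ τ in t0..t, (A τ).mulVec (w τ))
    (h0 : u t0 = w t0) : ∀ t ∈ Icc a b, u t = w t := by
  have hfwd : ∀ t ∈ Icc t0 b, u t = w t := by
    refine hA.uniq_fwd hu hw ht0.2 (fun t ht => hue t ⟨ht0.1.trans ht.1, ht.2⟩)
      (fun t ht => hwe t ⟨ht0.1.trans ht.1, ht.2⟩) h0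
  -- backward via time reversal
  have hrev := hA.reverse t0
  have hbwd : ∀ t ∈ Icc t0 (2*t0 - a), u (2*t0 - t) = w (2*t0 - t) := by
    have hmem : ∀ t ∈ Icc t0 (2*t0 - a), (2*t0 - t) ∈ Icc a b := by
      intro t ht
      constructor
      · have := ht.2; linarith
      · have := ht.1; have := ht0.2; linarith
    have hueq : ∀ (v : ℝ → Fin d → ℝ),
        (∀ t ∈ Icc a b, v t = v t0 + ∫ τ in t0..t, (A τ).mulVec (v τ)) →
        ∀ t ∈ Icc t0 (2*t0 - a), v (2*t0 - t) = v (2*t0 - t0) +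
          ∫ τ in t0..t, ((fun s => -A (2*t0 - s)) τ).mulVec (v (2*t0 - τ)) := by
      intro v hv t ht
      have e0 : 2*t0 - t0 = t0 := by ring
      rw [e0]
      have h1 := hv (2*t0 - t) (hmem t ht)
      rw [h1, integral_reverse]
      congr 1
      refine intervalIntegral.integral_congr fun τ _ => ?_
      rw [Matrix.neg_mulVec]
    have := hrev.uniq_fwd (u := fun s => u (2*t0 - s)) (w := fun s => w (2*t0 - s))
      (hu.comp (continuous_const.sub continuous_id))
      (hw.comp (continuous_const.sub continuous_id))
      (by have := ht0.1; linarith : t0 ≤ 2*t0 - a)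
      (hueq u hue) (hueq w hwe)
      (by simpa [show 2*t0 - t0 = t0 by ring] using h0)
    exact this
  intro t ht
  rcases le_total t0 t with h | h
  · exact hfwd t ⟨h, ht.2⟩
  · have hs : (2*t0 - t) ∈ Icc t0 (2*t0 - a) := by
      constructor
      · linarith
      · have := ht.1; linarith
    have := hbwd (2*t0 - t) hs
    have e : 2*t0 - (2*t0 - t) = t := by ring
    rwa [e] at this


lemma exists_fwd {t0 b : ℝ} (htb : t0 ≤ b) (v0 : Fin d → ℝ) :
    ∃ w : ℝ → Fin d → ℝ, Continuous w ∧
      ∀ t ∈ Icc t0 b, w t = v0 + ∫ τ in t0..t, (A τ).mulVec (w τ) := by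
  set S : Set ℝ := {r | r ∈ Icc t0 b ∧ ∃ w : ℝ → Fin d → ℝ, Continuous w ∧
      ∀ t ∈ Icc t0 r, w t = v0 + ∫ τ in t0..t, (A τ).mulVec (w τ)} with hS
  have ht0S : t0 ∈ S := by
    refine ⟨⟨le_refl _, htb⟩, fun _ => v0, continuous_const, fun t ht => ?_⟩
    have hteq : t = t0 := le_antisymm ht.2 ht.1
    rw [hteq]
    simp
  have hSne : S.Nonempty := ⟨t0, ht0S⟩
  have hbdd : BddAbove S := ⟨b, fun r hr => hr.1.2⟩
  have ht0r0 : t0 ≤ sSup S := le_csSup hbdd ht0S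
  have hr0b : sSup S ≤ b := csSup_le hSne fun r hr => hr.1.2
  set r0 := sSup S with hr0def
  have hGcont : Continuous fun r => ∫ τ in r0..r, (d:ℝ) * c τ :=
    intervalIntegral.continuous_primitive (fun a' b' => (hA.cint a' b').const_mul _) r0
  have hev : ∀ᶠ r in nhds r0, |∫ τ in r0..r, (d:ℝ) * c τ| < 1/4 := by
    have h1 : Tendsto (fun r => |∫ τ in r0..r, (d:ℝ) * c τ|) (nhds r0) (nhds 0) := by
      have h2 := hGcont.tendsto r0
      rw [intervalIntegral.integral_same] at h2
      simpa using h2.abs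
    exact h1.eventually_lt_const (by norm_num)
  obtain ⟨δ, hδ0, hδ⟩ := Metric.eventually_nhds_iff.1 hev
  obtain ⟨r, hrS, hrlt⟩ := exists_lt_of_lt_csSup hSne (by linarith : r0 - δ/2 < r0)
  have hrr0 : r ≤ r0 := le_csSup hbdd hrS
  obtain ⟨⟨htr, hrb⟩, w, hwcont, hweq⟩ := hrS
  set β := min (r0 + δ/2) b with hβ
  have hr0β : r0 ≤ β := le_min (by linarith) hr0b
  have hrβ : r ≤ β := hrr0.trans hr0β
  have hβb : β ≤ b := min_le_right _ _
  have hsmall : (∫ τ in r..β, (d:ℝ) * c τ) ≤ 1/2 := by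
    have hadd : (∫ τ in r..r0, (d:ℝ) * c τ) + (∫ τ in r0..β, (d:ℝ) * c τ)
        = ∫ τ in r..β, (d:ℝ) * c τ :=
      intervalIntegral.integral_add_adjacent_intervals
        ((hA.cint r r0).const_mul _) ((hA.cint r0 β).const_mul _)
    have h1 : |∫ τ in r0..r, (d:ℝ) * c τ| < 1/4 := by
      apply hδ; rw [Real.dist_eq, abs_lt]; exact ⟨by linarith, by linarith⟩
    have h2 : |∫ τ in r0..β, (d:ℝ) * c τ| < 1/4 := by
      apply hδ; rw [Real.dist_eq, abs_lt]
      have : β ≤ r0 + δ/2 := min_le_left _ _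
      exact ⟨by linarith, by linarith⟩
    have h3 : (∫ τ in r..r0, (d:ℝ) * c τ) = -∫ τ in r0..r, (d:ℝ) * c τ :=
      intervalIntegral.integral_symm _ _
    have h1' := abs_lt.1 h1
    have h2' := abs_lt.1 h2
    rw [← hadd, h3]
    linarith [h1'.1, h1'.2, h2'.1, h2'.2]
  obtain ⟨u, hucont, hueq⟩ := hA.exists_local (α := r) (β := β) (t0 := r)
    ⟨le_refl r, hrβ⟩ hsmall (w r)
  have hur : u r = w r := by
    have := hueq r ⟨le_refl r, hrβ⟩
    simpa using this
  set w' : ℝ → Fin d → ℝ := fun t => if t ≤ r then w t else u t with hw'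
  have hw'cont : Continuous w' := by
    refine Continuous.if_le hwcont hucont continuous_id continuous_const fun x hx => ?_
    rw [hx, hur]
  have hw'eq : ∀ t ∈ Icc t0 β, w' t = v0 + ∫ τ in t0..t, (A τ).mulVec (w' τ) := by
    intro t ht
    rcases le_or_gt t r with h' | h'
    · have e1 : w' t = w t := if_pos h'
      have e2 : (∫ τ in t0..t, (A τ).mulVec (w' τ)) = ∫ τ in t0..t, (A τ).mulVec (w τ) := by
        refine intervalIntegral.integral_congr fun τ hτ => ?_
        rw [uIcc_of_le ht.1] at hτ
        have hh : w' τ = w τ := if_pos (hτ.2.trans h')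
        rw [hh]
      rw [e1, e2]
      exact hweq t ⟨ht.1, h'⟩
    · have e1 : w' t = u t := if_neg (not_le.2 h')
      have e2 : u t = w r + ∫ τ in r..t, (A τ).mulVec (u τ) :=
        hueq t ⟨le_of_lt h', ht.2⟩
      have e3 : (∫ τ in t0..r, (A τ).mulVec (w τ)) = ∫ τ in t0..r, (A τ).mulVec (w' τ) := by
        refine intervalIntegral.integral_congr fun τ hτ => ?_
        rw [uIcc_of_le htr] at hτ
        have hh : w' τ = w τ := if_pos hτ.2
        rw [hh]
      have e4 : (∫ τ in r..t, (A τ).mulVec (u τ)) = ∫ τ in r..t, (A τ).mulVec (w' τ) := by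
        refine intervalIntegral.integral_congr fun τ hτ => ?_
        rw [uIcc_of_le (le_of_lt h')] at hτ
        rcases le_or_gt τ r with h'' | h''
        · have hτr : τ = r := le_antisymm h'' hτ.1
          have hh : w' τ = w τ := if_pos h''
          rw [hh, hτr, hur]
        · have hh : w' τ = u τ := if_neg (not_le.2 h'')
          rw [hh]
      have e5 : (∫ τ in t0..r, (A τ).mulVec (w' τ)) + (∫ τ in r..t, (A τ).mulVec (w' τ))
          = ∫ τ in t0..t, (A τ).mulVec (w' τ) :=
        intervalIntegral.integral_add_adjacent_intervals
          (hA.intInt hw'cont t0 r) (hA.intInt hw'cont r t)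
      rw [e1, e2, hweq r ⟨htr, le_refl r⟩, e4, ← e5, ← e3]
      rw [add_assoc]
  have hβS : β ∈ S := ⟨⟨ht0r0.trans hr0β, hβb⟩, w', hw'cont, hw'eq⟩
  have hβr0 : β ≤ r0 := le_csSup hbdd hβS
  have hbr0 : b ≤ r0 := by
    by_contra hcon
    push_neg at hcon
    have : r0 < β := lt_min (by linarith) hcon
    linarith
  have hr0b' : r0 = b := le_antisymm hr0b hbr0
  have hβeq : β = b := by
    rw [hβ, hr0b']
    exact min_eq_right (by linarith)
  exact ⟨w', hw'cont, hβeq ▸ hw'eq⟩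

end GoodCoeff

def IsSolution {d : ℕ} (A : ℝ → Matrix (Fin d) (Fin d) ℝ) (w : ℝ → Fin d → ℝ) : Prop :=
  Continuous w ∧ ∀ s t : ℝ, w t = w s + ∫ τ in s..t, (A τ).mulVec (w τ)

namespace GoodCoeff
variable {d : ℕ} {A : ℝ → Matrix (Fin d) (Fin d) ℝ} {c : ℝ → ℝ} (hA : GoodCoeff A c)
include hA

lemma exists_icc {a b t0 : ℝ} (ht0 : t0 ∈ Icc a b) (v0 : Fin d → ℝ) :
    ∃ w : ℝ → Fin d → ℝ, Continuous w ∧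
      ∀ t ∈ Icc a b, w t = v0 + ∫ τ in t0..t, (A τ).mulVec (w τ) := by
  obtain ⟨wf, hwfc, hwfe⟩ := hA.exists_fwd ht0.2 v0
  have hrev := hA.reverse t0
  obtain ⟨wb', hwbc', hwbe'⟩ := hrev.exists_fwd (by have := ht0.1; linarith : t0 ≤ 2*t0 - a) v0
  set wb : ℝ → Fin d → ℝ := fun t => wb' (2*t0 - t) with hwb
  have hwbc : Continuous wb := hwbc'.comp (continuous_const.sub continuous_id)
  have hwbe : ∀ t ∈ Icc a t0, wb t = v0 + ∫ τ in t0..t, (A τ).mulVec (wb τ) := by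
    intro t ht
    have hmem : 2*t0 - t ∈ Icc t0 (2*t0 - a) := ⟨by linarith [ht.2], by linarith [ht.1]⟩
    have h1 : wb t = v0 + ∫ τ in t0..(2*t0 - t),
        ((fun s => -A (2*t0 - s)) τ).mulVec (wb' τ) := hwbe' (2*t0 - t) hmem
    rw [h1]
    congr 1
    rw [integral_reverse (fun x => ((fun s => -A (2*t0 - s)) x).mulVec (wb' x)) t0 t]
    refine intervalIntegral.integral_congr fun τ _ => ?_
    have e : 2*t0 - (2*t0 - τ) = τ := by ring
    show -((-A (2*t0 - (2*t0 - τ))).mulVec (wb' (2*t0 - τ))) = (A τ).mulVec (wb τ)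
    rw [e, Matrix.neg_mulVec, neg_neg]
  have hwf0 : wf t0 = v0 := by
    have := hwfe t0 ⟨le_refl t0, ht0.2⟩
    simpa using this
  have hwb0 : wb t0 = v0 := by
    have h1 : wb t0 = wb' t0 := by
      show wb' (2*t0 - t0) = wb' t0
      congr 1
      ring
    have h2 := hwbe' t0 ⟨le_refl t0, by linarith [ht0.1]⟩
    rw [h1, h2]
    simp
  set w : ℝ → Fin d → ℝ := fun t => if t ≤ t0 then wb t else wf t with hw
  have hwcont : Continuous w := by
    refine Continuous.if_le hwbc hwfc continuous_id continuous_const fun x hx => ?_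
    rw [hx, hwb0, hwf0]
  refine ⟨w, hwcont, fun t ht => ?_⟩
  rcases le_or_gt t t0 with h' | h'
  · have e1 : w t = wb t := if_pos h'
    have e2 : (∫ τ in t0..t, (A τ).mulVec (w τ)) = ∫ τ in t0..t, (A τ).mulVec (wb τ) := by
      refine intervalIntegral.integral_congr fun τ hτ => ?_
      rw [uIcc_of_ge h'] at hτ
      have hh : w τ = wb τ := if_pos hτ.2
      rw [hh]
    rw [e1, e2]
    exact hwbe t ⟨ht.1, h'⟩
  · have e1 : w t = wf t := if_neg (not_le.2 h')
    have e2 : (∫ τ in t0..t, (A τ).mulVec (w τ)) = ∫ τ in t0..t, (A τ).mulVec (wf τ) := by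
      refine intervalIntegral.integral_congr fun τ hτ => ?_
      rw [uIcc_of_le (le_of_lt h')] at hτ
      rcases le_or_gt τ t0 with h'' | h''
      · have hτ0 : τ = t0 := le_antisymm h'' hτ.1
        have hh : w τ = wb τ := if_pos h''
        rw [hh, hτ0, hwb0, hwf0]
      · have hh : w τ = wf τ := if_neg (not_le.2 h'')
        rw [hh]
    rw [e1, e2]
    exact hwfe t ⟨le_of_lt h', ht.2⟩

lemma exists_global (t0 : ℝ) (v0 : Fin d → ℝ) :
    ∃ w : ℝ → Fin d → ℝ, IsSolution A w ∧ w t0 = v0 := by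
  have hmem : ∀ n : ℕ, t0 ∈ Icc (t0 - n) (t0 + n) := by
    intro n
    constructor <;> [linarith [Nat.cast_nonneg (α := ℝ) n]; linarith [Nat.cast_nonneg (α := ℝ) n]]
  have hex : ∀ n : ℕ, ∃ w : ℝ → Fin d → ℝ, Continuous w ∧
      ∀ t ∈ Icc (t0 - n) (t0 + n), w t = v0 + ∫ τ in t0..t, (A τ).mulVec (w τ) :=
    fun n => hA.exists_icc (hmem n) v0
  choose W hWc hWe using hex
  have hW0 : ∀ n, W n t0 = v0 := by
    intro n
    have := hWe n t0 (hmem n)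
    simpa using this
  have habs : ∀ (n : ℕ) (τ : ℝ), |τ - t0| ≤ n → τ ∈ Icc (t0 - n) (t0 + n) := by
    intro n τ h
    rw [abs_le] at h
    exact ⟨by linarith [h.1], by linarith [h.2]⟩
  have hagree : ∀ m n : ℕ, m ≤ n → ∀ τ ∈ Icc (t0 - (m:ℝ)) (t0 + m), W m τ = W n τ := by
    intro m n hmn
    refine hA.uniq_icc (hWc m) (hWc n) (hmem m) ?_ ?_ ?_
    · intro τ hτ
      rw [hW0 m] at *
      exact hWe m τ hτ
    · intro τ hτ
      rw [hW0 n]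
      refine hWe n τ ?_
      have hc : (m:ℝ) ≤ n := Nat.cast_le.2 hmn
      exact ⟨by linarith [hτ.1], by linarith [hτ.2]⟩
    · rw [hW0 m, hW0 n]
  set w : ℝ → Fin d → ℝ := fun t => W ⌈|t - t0|⌉₊ t with hwdef
  have key : ∀ (n : ℕ) (τ : ℝ), |τ - t0| ≤ n → w τ = W n τ := by
    intro n τ h
    have hm : |τ - t0| ≤ (⌈|τ - t0|⌉₊ : ℝ) := Nat.le_ceil _
    rcases le_total (⌈|τ - t0|⌉₊ : ℕ) n with hmn | hmn
    · exact hagree _ n hmn τ (habs _ τ hm)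
    · exact (hagree n _ hmn τ (habs n τ h)).symm
  have hwc : Continuous w := by
    rw [continuous_iff_continuousAt]
    intro t
    set n : ℕ := ⌈|t - t0|⌉₊ + 1 with hn
    have hopen : IsOpen {s : ℝ | |s - t0| < n} :=
      isOpen_lt (continuous_id.sub continuous_const).abs continuous_const
    have htmem : t ∈ {s : ℝ | |s - t0| < n} := by
      have := Nat.le_ceil |t - t0|
      simp only [Set.mem_setOf_eq, hn]
      push_cast
      linarith
    have hev : w =ᶠ[nhds t] W n :=
      Filter.eventuallyEq_of_mem (hopen.mem_nhds htmem) fun s hs => key n s (le_of_lt hs)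
    exact ((hWc n).continuousAt).congr hev.symm
  have hw0 : w t0 = v0 := by
    have := key 0 t0 (by simp)
    rw [this, hW0]
  refine ⟨w, ⟨hwc, fun s t => ?_⟩, hw0⟩
  set n : ℕ := ⌈|s - t0|⌉₊ + ⌈|t - t0|⌉₊ with hn
  have hsn : |s - t0| ≤ n := by
    have := Nat.le_ceil |s - t0|
    simp only [hn]
    push_cast
    linarith [Nat.cast_nonneg (α := ℝ) ⌈|t - t0|⌉₊]
  have htn : |t - t0| ≤ n := by
    have := Nat.le_ceil |t - t0|
    simp only [hn]
    push_cast
    linarith [Nat.cast_nonneg (α := ℝ) ⌈|s - t0|⌉₊]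
  have huicc : ∀ τ ∈ uIcc s t, |τ - t0| ≤ n := by
    intro τ hτ
    rw [abs_le] at hsn htn ⊢
    rcases le_total s t with h | h
    · rw [uIcc_of_le h] at hτ
      exact ⟨by linarith [hτ.1, hsn.1], by linarith [hτ.2, htn.2]⟩
    · rw [uIcc_of_ge h] at hτ
      exact ⟨by linarith [hτ.1, htn.1], by linarith [hτ.2, hsn.2]⟩
  have e1 : w t = W n t := key n t htn
  have e2 : w s = W n s := key n s hsn
  have e3 : (∫ τ in s..t, (A τ).mulVec (w τ)) = ∫ τ in s..t, (A τ).mulVec (W n τ) := by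
    refine intervalIntegral.integral_congr fun τ hτ => ?_
    rw [key n τ (huicc τ hτ)]
  have e4 : W n t = v0 + ∫ τ in t0..t, (A τ).mulVec (W n τ) := hWe n t (habs n t htn)
  have e5 : W n s = v0 + ∫ τ in t0..s, (A τ).mulVec (W n τ) := hWe n s (habs n s hsn)
  have e6 : (∫ τ in s..t0, (A τ).mulVec (W n τ)) + (∫ τ in t0..t, (A τ).mulVec (W n τ))
      = ∫ τ in s..t, (A τ).mulVec (W n τ) :=
    intervalIntegral.integral_add_adjacent_intervals
      (hA.intInt (hWc n) s t0) (hA.intInt (hWc n) t0 t)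
  have e7 : (∫ τ in s..t0, (A τ).mulVec (W n τ)) = -∫ τ in t0..s, (A τ).mulVec (W n τ) :=
    intervalIntegral.integral_symm _ _
  rw [e1, e2, e3, e4, e5, ← e6, e7]
  abel

lemma uniq_global {u w : ℝ → Fin d → ℝ} (hu : IsSolution A u) (hw : IsSolution A w)
    {t1 : ℝ} (h : u t1 = w t1) : ∀ t, u t = w t := by
  intro t
  have ht1 : t1 ∈ Icc (min t1 t) (max t1 t) := ⟨min_le_left _ _, le_max_left _ _⟩
  have ht : t ∈ Icc (min t1 t) (max t1 t) := ⟨min_le_right _ _, le_max_right _ _⟩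
  exact hA.uniq_icc hu.1 hw.1 ht1 (fun τ _ => hu.2 t1 τ) (fun τ _ => hw.2 t1 τ) h t ht

end GoodCoeff

namespace GoodCoeff
variable {d : ℕ} {A : ℝ → Matrix (Fin d) (Fin d) ℝ} {c : ℝ → ℝ} (hA : GoodCoeff A c)
include hA

lemma solution_nonneg (hMetz : ∀ t i j, i ≠ j → 0 ≤ A t i j)
    {w : ℝ → Fin d → ℝ} (hw : IsSolution A w) {s t : ℝ} (hst : s ≤ t)
    (h0 : ∀ i, 0 ≤ w s i) : ∀ i, 0 ≤ w t i := by
  set φ : ℝ → ℝ := fun τ => ∑ i, max 0 (-(w τ i)) with hφdef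
  have hφc : Continuous φ := by
    apply continuous_finset_sum
    intro i _
    exact continuous_const.max ((continuous_apply i).comp hw.1).neg
  have hφ0 : ∀ τ, 0 ≤ φ τ := fun τ => Finset.sum_nonneg fun i _ => le_max_left _ _
  have hφint : ∀ a' b' : ℝ, IntervalIntegrable (fun τ => c τ * φ τ) volume a' b' :=
    fun a' b' => (hA.cint a' b').mul_continuousOn hφc.continuousOn
  have hcomp : ∀ r ∈ Icc s t, ∀ i : Fin d, max 0 (-(w r i)) ≤ ∫ τ in s..r, c τ * φ τ := by
    intro r hr i
    have hint_nonneg : 0 ≤ ∫ τ in s..r, c τ * φ τ :=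
      intervalIntegral.integral_nonneg hr.1 fun τ _ => mul_nonneg (hA.c0 τ) (hφ0 τ)
    rcases le_or_gt 0 (w r i) with hpos | hneg
    · rw [max_eq_left (by linarith)]
      exact hint_nonneg
    · set T := Icc s r ∩ {τ : ℝ | 0 ≤ w τ i} with hT
      have hTcomp : IsCompact T :=
        isCompact_Icc.inter_right (isClosed_le continuous_const ((continuous_apply i).comp hw.1))
      have hTne : T.Nonempty := ⟨s, ⟨le_refl s, hr.1⟩, h0 i⟩
      set σ := sSup T with hσdef
      have hσT : σ ∈ T := hTcomp.sSup_mem hTne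
      have hsσ : s ≤ σ := hσT.1.1
      have hσr : σ ≤ r := hσT.1.2
      have hwσ : 0 ≤ w σ i := hσT.2
      have hneg' : ∀ τ ∈ Ioc σ r, w τ i ≤ 0 := by
        intro τ hτ
        by_contra hcon
        push_neg at hcon
        have hτT : τ ∈ T := ⟨⟨hsσ.trans (le_of_lt hτ.1), hτ.2⟩, le_of_lt hcon⟩
        have := le_csSup hTcomp.bddAbove hτT
        linarith [hτ.1]
      have heqc : w r i = w σ i + ∫ τ in σ..r, (A τ).mulVec (w τ) i := by
        have h1 := hw.2 σ r
        have h2 : (∫ τ in σ..r, (A τ).mulVec (w τ)) i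
            = ∫ τ in σ..r, (A τ).mulVec (w τ) i :=
          intervalIntegral_apply (hA.intInt hw.1 σ r) i
        calc w r i = (w σ + ∫ τ in σ..r, (A τ).mulVec (w τ)) i := by rw [← h1]
          _ = w σ i + ∫ τ in σ..r, (A τ).mulVec (w τ) i := by rw [Pi.add_apply, h2]
      have hpt : ∀ τ ∈ Ioc σ r, -((A τ).mulVec (w τ) i) ≤ c τ * φ τ := by
        intro τ hτ
        have hexp : (A τ).mulVec (w τ) i = ∑ j, A τ i j * w τ j := rfl
        rw [hexp, ← Finset.sum_neg_distrib]
        have hmulsum : c τ * φ τ = ∑ j, c τ * max 0 (-(w τ j)) := Finset.mul_sum _ _ _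
        rw [hmulsum]
        refine Finset.sum_le_sum fun j _ => ?_
        rw [← mul_neg]
        rcases eq_or_ne j i with hji | hji
        · subst hji
          have hwj : w τ j ≤ 0 := hneg' τ hτ
          have hmax : max 0 (-(w τ j)) = -(w τ j) := max_eq_right (by linarith)
          rw [hmax]
          refine mul_le_mul_of_nonneg_right ?_ (by linarith)
          exact (le_abs_self _).trans (hA.bound τ j j)
        · have hAij : 0 ≤ A τ i j := hMetz τ i j (Ne.symm hji)
          calc A τ i j * (-(w τ j)) ≤ A τ i j * max 0 (-(w τ j)) :=
                mul_le_mul_of_nonneg_left (le_max_right _ _) hAij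
            _ ≤ c τ * max 0 (-(w τ j)) :=
                mul_le_mul_of_nonneg_right ((le_abs_self _).trans (hA.bound τ i j))
                  (le_max_left _ _)
      have hIoc : -(w r i) ≤ ∫ τ in s..r, c τ * φ τ := by
        have h3 : -(w r i) = -(w σ i) + (- ∫ τ in σ..r, (A τ).mulVec (w τ) i) := by
          rw [heqc]; ring
        have h5 : (- ∫ τ in σ..r, (A τ).mulVec (w τ) i)
            = ∫ τ in σ..r, -((A τ).mulVec (w τ) i) := by
          rw [intervalIntegral.integral_neg]
        have h6 : (∫ τ in σ..r, -((A τ).mulVec (w τ) i)) ≤ ∫ τ in σ..r, c τ * φ τ := by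
          rw [intervalIntegral.integral_of_le hσr, intervalIntegral.integral_of_le hσr]
          refine setIntegral_mono_on ((hA.intInt_comp hw.1 σ r i).neg).1 (hφint σ r).1
            measurableSet_Ioc fun τ hτ => hpt τ hτ
        have h7 : (∫ τ in σ..r, c τ * φ τ) ≤ ∫ τ in s..r, c τ * φ τ :=
          intervalIntegral.integral_mono_interval hsσ hσr (le_refl r)
            (ae_of_all _ fun τ => mul_nonneg (hA.c0 τ) (hφ0 τ)) (hφint s r)
        have h4 : -(w σ i) ≤ 0 := neg_nonpos.2 hwσ
        calc -(w r i) = -(w σ i) + (- ∫ τ in σ..r, (A τ).mulVec (w τ) i) := h3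
          _ ≤ 0 + (∫ τ in σ..r, -((A τ).mulVec (w τ) i)) := by rw [h5]; linarith [h4]
          _ = ∫ τ in σ..r, -((A τ).mulVec (w τ) i) := by ring
          _ ≤ ∫ τ in s..r, c τ * φ τ := h6.trans h7
      rw [max_eq_right (by linarith : (0:ℝ) ≤ -(w r i))]
      exact hIoc
  have hsum : ∀ r ∈ Icc s t, φ r ≤ ∫ τ in s..r, ((d:ℝ) * c τ) * φ τ := by
    intro r hr
    have h1 : φ r ≤ ∑ _i : Fin d, ∫ τ in s..r, c τ * φ τ :=
      Finset.sum_le_sum fun i _ => hcomp r hr i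
    have h2 : (∑ _i : Fin d, ∫ τ in s..r, c τ * φ τ)
        = (d:ℝ) * ∫ τ in s..r, c τ * φ τ := by
      rw [Finset.sum_const, Finset.card_univ, Fintype.card_fin, nsmul_eq_mul]
    have h3 : (d:ℝ) * (∫ τ in s..r, c τ * φ τ) = ∫ τ in s..r, ((d:ℝ) * c τ) * φ τ := by
      rw [← intervalIntegral.integral_const_mul]
      refine intervalIntegral.integral_congr fun τ _ => ?_
      ring
    calc φ r ≤ ∑ _i : Fin d, ∫ τ in s..r, c τ * φ τ := h1
      _ = (d:ℝ) * ∫ τ in s..r, c τ * φ τ := h2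
      _ = ∫ τ in s..r, ((d:ℝ) * c τ) * φ τ := h3
  have hz : ∀ r ∈ Icc s t, φ r = 0 :=
    gronwall_zero (fun τ => (d:ℝ) * c τ) φ
      (fun a' b' => (hA.cint a' b').const_mul _)
      (fun τ => mul_nonneg (by positivity) (hA.c0 τ)) hφc s t hst
      (fun r _ => hφ0 r) hsum
  intro i
  have hφt : φ t = 0 := hz t ⟨hst, le_refl t⟩
  have hterm : max 0 (-(w t i)) = 0 := by
    have hle : max 0 (-(w t i)) ≤ φ t :=
      Finset.single_le_sum (f := fun j => max 0 (-(w t j)))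
        (fun j _ => le_max_left _ _) (Finset.mem_univ i)
    have hge : 0 ≤ max 0 (-(w t i)) := le_max_left _ _
    linarith
  by_contra hcon
  push_neg at hcon
  have : max 0 (-(w t i)) = -(w t i) := max_eq_right (by linarith)
  rw [this] at hterm
  linarith

end GoodCoeff

section EopNorm
variable {N : ℕ}

lemma enorm'_nonneg (u : Fin N → ℝ) : 0 ≤ enorm' u := Real.sqrt_nonneg _

lemma abs_le_enorm' (u : Fin N → ℝ) (j : Fin N) : |u j| ≤ enorm' u := by
  rw [← Real.sqrt_sq_eq_abs]
  exact Real.sqrt_le_sqrt (Finset.single_le_sum (f := fun i => u i ^ 2)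
    (fun i _ => sq_nonneg _) (Finset.mem_univ j))

lemma enorm'_le_sum_abs (u : Fin N → ℝ) : enorm' u ≤ ∑ i, |u i| := by
  have hS : 0 ≤ ∑ i, |u i| := Finset.sum_nonneg fun i _ => abs_nonneg _
  have h : ∑ i, u i ^ 2 ≤ (∑ i, |u i|) ^ 2 := by
    have h1 : ∀ i : Fin N, u i ^ 2 ≤ |u i| * ∑ j, |u j| := by
      intro i
      have h2 : |u i| ≤ ∑ j, |u j| :=
        Finset.single_le_sum (f := fun j => |u j|) (fun j _ => abs_nonneg _)
          (Finset.mem_univ i)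
      calc u i ^ 2 = |u i| * |u i| := by rw [← abs_mul, sq]; exact (abs_of_nonneg (mul_self_nonneg _)).symm
        _ ≤ |u i| * ∑ j, |u j| := mul_le_mul_of_nonneg_left h2 (abs_nonneg _)
    calc ∑ i, u i ^ 2 ≤ ∑ i, |u i| * ∑ j, |u j| := Finset.sum_le_sum fun i _ => h1 i
      _ = (∑ i, |u i|) ^ 2 := by rw [← Finset.sum_mul, sq]
  calc enorm' u ≤ Real.sqrt ((∑ i, |u i|) ^ 2) := Real.sqrt_le_sqrt h
    _ = ∑ i, |u i| := Real.sqrt_sq hS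

lemma eopNorm_bddAbove (M : Matrix (Fin N) (Fin N) ℝ) :
    BddAbove {c : ℝ | ∃ u : Fin N → ℝ, enorm' u ≤ 1 ∧ c = enorm' (M.mulVec u)} := by
  refine ⟨∑ i, ∑ j, |M i j|, fun x hx => ?_⟩
  obtain ⟨u, hu, rfl⟩ := hx
  calc enorm' (M.mulVec u) ≤ ∑ i, |M.mulVec u i| := enorm'_le_sum_abs _
    _ ≤ ∑ i, ∑ j, |M i j| := by
      refine Finset.sum_le_sum fun i _ => ?_
      have he : M.mulVec u i = ∑ j, M i j * u j := rfl
      rw [he]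
      calc |∑ j, M i j * u j| ≤ ∑ j, |M i j * u j| := Finset.abs_sum_le_sum_abs _ _
        _ ≤ ∑ j, |M i j| := by
          refine Finset.sum_le_sum fun j _ => ?_
          rw [abs_mul]
          calc |M i j| * |u j| ≤ |M i j| * 1 :=
                mul_le_mul_of_nonneg_left ((abs_le_enorm' u j).trans hu) (abs_nonneg _)
            _ = |M i j| := mul_one _

lemma abs_entry_le_eopNorm (M : Matrix (Fin N) (Fin N) ℝ) (i j : Fin N) :
    |M i j| ≤ eopNorm M := by
  set u : Fin N → ℝ := fun j' => if j' = j then 1 else 0 with hu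
  have hnu : enorm' u = 1 := by
    have : ∀ j' : Fin N, u j' ^ 2 = if j' = j then 1 else 0 := by
      intro j'
      by_cases h : j' = j <;> simp [hu, h]
    rw [enorm']
    simp only [this]
    rw [Finset.sum_ite_eq' Finset.univ j (fun _ => (1:ℝ))]
    simp
  have hMu : M.mulVec u i = M i j := by
    have he : M.mulVec u i = ∑ j', M i j' * u j' := rfl
    rw [he]
    have : ∀ j' : Fin N, M i j' * u j' = if j' = j then M i j' else 0 := by
      intro j'
      by_cases h : j' = j <;> simp [hu, h]
    simp only [this]
    rw [Finset.sum_ite_eq' Finset.univ j (fun j' => M i j')]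
    simp
  have hmem : enorm' (M.mulVec u) ∈
      {c : ℝ | ∃ u : Fin N → ℝ, enorm' u ≤ 1 ∧ c = enorm' (M.mulVec u)} :=
    ⟨u, le_of_eq hnu, rfl⟩
  calc |M i j| = |M.mulVec u i| := by rw [hMu]
    _ ≤ enorm' (M.mulVec u) := abs_le_enorm' _ i
    _ ≤ eopNorm M := le_csSup (eopNorm_bddAbove M) hmem

lemma eopNorm_nonneg (M : Matrix (Fin N) (Fin N) ℝ) : 0 ≤ eopNorm M := by
  have hmem : enorm' (M.mulVec 0) ∈
      {c : ℝ | ∃ u : Fin N → ℝ, enorm' u ≤ 1 ∧ c = enorm' (M.mulVec u)} := by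
    refine ⟨0, ?_, rfl⟩
    have : enorm' (0 : Fin N → ℝ) = 0 := by simp [enorm']
    rw [this]
    norm_num
  exact (enorm'_nonneg _).trans (le_csSup (eopNorm_bddAbove M) hmem)

end EopNorm

lemma smul_normalize_eq {E : Type*} [NormedAddCommGroup E] [NormedSpace ℝ E]
    {a : ℝ} (ha : 0 < a) {z : E} (hz : z ≠ 0) :
    ‖a • z‖⁻¹ • (a • z) = ‖z‖⁻¹ • z := by
  rw [norm_smul, Real.norm_eq_abs, abs_of_pos ha, smul_smul, mul_inv]
  congr 1
  have hzn : ‖z‖ ≠ 0 := norm_ne_zero_iff.2 hz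
  field_simp


/-- Existence of a nontrivial entire positive solution (with respect to
the type-K cone) for a random type-K monotone linear system of ODEs. -/
theorem stmt_19 {N : ℕ} (hN : 2 ≤ N)
    {Ω : Type*} [MeasurableSpace Ω] (ℙ : Measure Ω) [IsProbabilityMeasure ℙ]
    [ℙ.IsComplete]
    (θ : ℝ → Ω → Ω) (hθ0 : θ 0 = id)
    (hθadd : ∀ s t : ℝ, θ (s + t) = θ s ∘ θ t)
    (hθjm : Measurable fun p : ℝ × Ω => θ p.1 p.2)
    (hθmp : ∀ t, MeasurePreserving (θ t) ℙ ℙ)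
    (hθerg : ∀ F : Set Ω, MeasurableSet F → (∀ t, θ t ⁻¹' F = F) →
      ℙ F = 0 ∨ ℙ F = 1)
    (B : Ω → Matrix (Fin N) (Fin N) ℝ)
    (hBmeas : ∀ i j, Measurable fun ω => B ω i j)
    (hBloc : ∀ ω, ∀ a c : ℝ,
      IntervalIntegrable (fun t => eopNorm (B (θ t ω))) volume a c)
    -- (P1) type-K monotonicity
    (k l : ℕ) (hk : 1 ≤ k) (hl : 1 ≤ l) (hkl : k + l = N)
    (hK1 : ∀ ω (i j : Fin N), i ≠ j →
      (((i : ℕ) < k ∧ (j : ℕ) < k) ∨ (k ≤ (i : ℕ) ∧ k ≤ (j : ℕ))) →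
      0 ≤ B ω i j)
    (hK2 : ∀ ω (i j : Fin N),
      (((i : ℕ) < k ∧ k ≤ (j : ℕ)) ∨ (k ≤ (i : ℕ) ∧ (j : ℕ) < k)) →
      B ω i j ≤ 0)
    -- (P2) integrability
    (hP2 : Integrable (fun ω => ⨆ i, ⨆ j, |B ω i j|) ℙ) :
    ∀ ω : Ω, ∃ v : ℝ → Fin N → ℝ, Continuous v ∧
      (∀ t : ℝ, ((∀ i : Fin N, (i : ℕ) < k → 0 ≤ v t i) ∧
        (∀ i : Fin N, k ≤ (i : ℕ) → v t i ≤ 0)) ∧ v t ≠ 0) ∧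
      (∀ s t : ℝ, s ≤ t → v t = v s + ∫ τ in s..t, (B (θ τ ω)).mulVec (v τ)) := by
  intro ω
  classical
  -- sign vector and conjugated (Metzler) system
  set ds : Fin N → ℝ := fun i => if (i : ℕ) < k then 1 else -1 with hds
  have hds2 : ∀ i, ds i * ds i = 1 := by
    intro i; by_cases h : (i : ℕ) < k <;> simp [hds, h]
  have hdsabs : ∀ i, |ds i| = 1 := by
    intro i; by_cases h : (i : ℕ) < k <;> simp [hds, h]
  have hds0 : ∀ i, ds i ≠ 0 := by
    intro i; by_cases h : (i : ℕ) < k <;> simp [hds, h]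
  have hθm : Measurable fun t : ℝ => θ t ω :=
    hθjm.comp (measurable_id.prodMk measurable_const)
  set cc : ℝ → ℝ := fun t => eopNorm (B (θ t ω)) with hcc
  set A : ℝ → Matrix (Fin N) (Fin N) ℝ :=
    fun t => Matrix.of fun i j => ds i * B (θ t ω) i j * ds j with hA
  have hAapp : ∀ t i j, A t i j = ds i * B (θ t ω) i j * ds j := fun _ _ _ => rfl
  have hGoodB : GoodCoeff (fun t => B (θ t ω)) cc :=
    ⟨fun i j => (hBmeas i j).comp hθm, hBloc ω, fun t => eopNorm_nonneg _,
     fun t i j => abs_entry_le_eopNorm _ i j⟩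
  have hGood : GoodCoeff A cc := by
    refine ⟨fun i j => ?_, hBloc ω, fun t => eopNorm_nonneg _, fun t i j => ?_⟩
    · simp only [hAapp]
      exact (((hBmeas i j).comp hθm).const_mul _).mul_const _
    · rw [hAapp, abs_mul, abs_mul, hdsabs, hdsabs, one_mul, mul_one]
      exact abs_entry_le_eopNorm _ i j
  have hMetz : ∀ t i j, i ≠ j → 0 ≤ A t i j := by
    intro t i j hij
    rw [hAapp]
    rcases lt_or_ge (i : ℕ) k with hi | hi <;> rcases lt_or_ge (j : ℕ) k with hj | hj
    · have e1 : ds i = 1 := if_pos hi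
      have e2 : ds j = 1 := if_pos hj
      rw [e1, e2, one_mul, mul_one]
      exact hK1 _ i j hij (Or.inl ⟨hi, hj⟩)
    · have e1 : ds i = 1 := if_pos hi
      have e2 : ds j = -1 := if_neg (not_lt.2 hj)
      rw [e1, e2, one_mul, mul_neg_one]
      exact neg_nonneg.2 (hK2 _ i j (Or.inl ⟨hi, hj⟩))
    · have e1 : ds i = -1 := if_neg (not_lt.2 hi)
      have e2 : ds j = 1 := if_pos hj
      rw [e1, e2, neg_one_mul, mul_one]
      exact neg_nonneg.2 (hK2 _ i j (Or.inr ⟨hi, hj⟩))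
    · have e1 : ds i = -1 := if_neg (not_lt.2 hi)
      have e2 : ds j = -1 := if_neg (not_lt.2 hj)
      rw [e1, e2, neg_one_mul, mul_neg_one, neg_neg]
      exact hK1 _ i j hij (Or.inr ⟨hi, hj⟩)
  -- solutions
  have hex := fun (s0 : ℝ) (y : Fin N → ℝ) => hGood.exists_global s0 y
  choose sol hsolS hsol0 using hex
  have hzeroS : IsSolution A (fun _ => (0 : Fin N → ℝ)) := by
    refine ⟨continuous_const, fun s t => ?_⟩
    have he : (fun τ : ℝ => (A τ).mulVec (0 : Fin N → ℝ)) = fun _ => (0 : Fin N → ℝ) := by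
      funext τ; exact Matrix.mulVec_zero _
    rw [he]
    simp
  have hsmulS : ∀ (r : ℝ) (u : ℝ → Fin N → ℝ), IsSolution A u →
      IsSolution A (fun τ => r • u τ) := by
    intro r u hu
    refine ⟨hu.1.const_smul r, fun s t => ?_⟩
    have he : (fun τ => (A τ).mulVec (r • u τ)) = fun τ => r • (A τ).mulVec (u τ) := by
      funext τ; exact Matrix.mulVec_smul _ _ _
    rw [he, intervalIntegral.integral_smul, ← smul_add, ← hu.2 s t]
  have haddS : ∀ u u' : ℝ → Fin N → ℝ, IsSolution A u → IsSolution A u' →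
      IsSolution A (fun τ => u τ + u' τ) := by
    intro u u' hu hu'
    refine ⟨hu.1.add hu'.1, fun s t => ?_⟩
    have he : (fun τ => (A τ).mulVec (u τ + u' τ))
        = fun τ => (A τ).mulVec (u τ) + (A τ).mulVec (u' τ) := by
      funext τ; exact Matrix.mulVec_add _ _ _
    rw [he, intervalIntegral.integral_add (hGood.intInt hu.1 s t) (hGood.intInt hu'.1 s t)]
    have e1 := hu.2 s t
    have e2 := hu'.2 s t
    show u t + u' t = (u s + u' s) + _
    rw [e1, e2]
    abel
  have hnn : ∀ (s0 t : ℝ) (y : Fin N → ℝ), s0 ≤ t → (∀ i, 0 ≤ y i) →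
      ∀ i, 0 ≤ sol s0 y t i := by
    intro s0 t y hst hy
    refine hGood.solution_nonneg hMetz (hsolS s0 y) hst ?_
    intro i
    rw [hsol0 s0 y]
    exact hy i
  have hinj : ∀ (s0 t : ℝ) (y : Fin N → ℝ), sol s0 y t = 0 → y = 0 := by
    intro s0 t y h
    have hh := hGood.uniq_global (hsolS s0 y) hzeroS (t1 := t) h
    rw [← hsol0 s0 y]
    exact hh s0
  have hcoc : ∀ (s0 s1 t : ℝ) (y : Fin N → ℝ), sol s0 y t = sol s1 (sol s0 y s1) t := by
    intro s0 s1 t y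
    have hh := hGood.uniq_global (hsolS s0 y) (hsolS s1 (sol s0 y s1)) (t1 := s1)
      (by rw [hsol0])
    exact hh t
  -- linear solution maps
  set L : ℕ → (Fin N → ℝ) →ₗ[ℝ] (Fin N → ℝ) := fun n =>
    { toFun := fun y => sol (-(n : ℝ)) y 0
      map_add' := by
        intro y z
        have h1 : IsSolution A (fun τ => sol (-(n:ℝ)) y τ + sol (-(n:ℝ)) z τ) :=
          haddS _ _ (hsolS _ _) (hsolS _ _)
        have h2 := hGood.uniq_global (hsolS (-(n:ℝ)) (y + z)) h1 (t1 := -(n:ℝ))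
          (by rw [hsol0, hsol0, hsol0])
        exact h2 0
      map_smul' := by
        intro r y
        have h1 : IsSolution A (fun τ => r • sol (-(n:ℝ)) y τ) :=
          hsmulS r _ (hsolS _ _)
        have h2 := hGood.uniq_global (hsolS (-(n:ℝ)) (r • y)) h1 (t1 := -(n:ℝ))
          (by rw [hsol0, hsol0])
        simpa using h2 0 } with hL
  have hLapp : ∀ (n : ℕ) (y : Fin N → ℝ), L n y = sol (-(n:ℝ)) y 0 := fun _ _ => rfl
  have hNne : Nonempty (Fin N) := ⟨⟨0, by omega⟩⟩
  set Kc : Set (Fin N → ℝ) := {y | (∀ i, 0 ≤ y i) ∧ ‖y‖ = 1} with hKcdef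
  have hKcclosed : IsClosed Kc := by
    rw [hKcdef, Set.setOf_and]
    refine IsClosed.inter ?_ (isClosed_eq continuous_norm continuous_const)
    rw [Set.setOf_forall]
    exact isClosed_iInter fun i => isClosed_le continuous_const (continuous_apply i)
  have hKcbdd : Bornology.IsBounded Kc :=
    (Metric.isBounded_closedBall (x := (0 : Fin N → ℝ)) (r := 1)).subset
      fun y hy => mem_closedBall_zero_iff.2 (le_of_eq hy.2)
  have hKccomp : IsCompact Kc := Metric.isCompact_of_isClosed_isBounded hKcclosed hKcbdd
  have hKcne : Kc.Nonempty := by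
    refine ⟨fun _ => 1, fun i => zero_le_one, ?_⟩
    rw [pi_norm_const (1:ℝ)]
    norm_num
  have hKc0 : ∀ y ∈ Kc, y ≠ 0 := by
    intro y hy hcon
    rw [hcon] at hy
    have := hy.2
    simp at this
  have hLker : ∀ (n : ℕ), ∀ y ∈ Kc, L n y ≠ 0 := by
    intro n y hy hcon
    exact hKc0 y hy (hinj (-(n:ℝ)) 0 y hcon)
  set G : ℕ → (Fin N → ℝ) → Fin N → ℝ := fun n y => ‖L n y‖⁻¹ • L n y with hG
  have hGcont : ∀ n, ContinuousOn (G n) Kc := by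
    intro n
    have hc : Continuous (L n) := (L n).continuous_of_finiteDimensional
    refine ContinuousOn.smul (f := fun y => ‖L n y‖⁻¹) ?_ hc.continuousOn
    exact (hc.norm.continuousOn).inv₀ fun y hy => norm_ne_zero_iff.2 (hLker n y hy)
  set F : ℕ → Set (Fin N → ℝ) := fun n => G n '' Kc with hF
  have hFcomp : ∀ n, IsCompact (F n) := fun n => hKccomp.image_of_continuousOn (hGcont n)
  have hFne : ∀ n, (F n).Nonempty := fun n => hKcne.image _
  have hFanti : ∀ n : ℕ, F (n + 1) ⊆ F n := by
    intro n x hx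
    obtain ⟨y, hy, rfl⟩ := hx
    set u : Fin N → ℝ := sol (-(((n+1):ℕ):ℝ)) y (-(n:ℝ)) with hu
    have hle : (-(((n+1):ℕ):ℝ)) ≤ -(n:ℝ) := by push_cast; linarith
    have hu0 : ∀ i, 0 ≤ u i := hnn _ _ y hle hy.1
    have hune : u ≠ 0 := fun h => hKc0 y hy (hinj _ _ y h)
    have hnu : 0 < ‖u‖ := norm_pos_iff.2 hune
    set y' : Fin N → ℝ := ‖u‖⁻¹ • u with hy'
    have hy'K : y' ∈ Kc := by
      constructor
      · intro i
        have he : y' i = ‖u‖⁻¹ * u i := rfl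
        rw [he]
        exact mul_nonneg (by positivity) (hu0 i)
      · rw [hy', norm_smul, norm_inv, norm_norm]
        field_simp
    have hcocL : L (n+1) y = L n u := by
      rw [hLapp, hLapp, hu]
      exact hcoc _ _ 0 y
    have hzne : L n u ≠ 0 := by
      rw [← hcocL]
      exact hLker (n+1) y hy
    refine ⟨y', hy'K, ?_⟩
    show ‖L n y'‖⁻¹ • L n y' = ‖L (n+1) y‖⁻¹ • L (n+1) y
    have hLy' : L n y' = ‖u‖⁻¹ • L n u := by rw [hy', _root_.map_smul]
    rw [hLy', hcocL]
    exact smul_normalize_eq (by positivity) hzne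
  obtain ⟨x, hx⟩ := IsCompact.nonempty_iInter_of_sequence_nonempty_isCompact_isClosed
    F hFanti hFne (hFcomp 0) fun n => (hFcomp n).isClosed
  have hxF : ∀ n, x ∈ F n := fun n => Set.mem_iInter.1 hx n
  have hxK : x ∈ Kc := by
    obtain ⟨y, hy, hxy⟩ := hxF 0
    have hL0 : L 0 y = y := by
      rw [hLapp]
      have e : -((0:ℕ):ℝ) = 0 := by norm_num
      rw [e]
      exact hsol0 0 y
    rw [← hxy]
    show (‖L 0 y‖⁻¹ • L 0 y) ∈ Kc
    rw [hL0, hy.2, inv_one, one_smul]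
    exact hy
  -- the entire solution through x
  set w : ℝ → Fin N → ℝ := sol 0 x with hwdef
  have hwS : IsSolution A w := hsolS 0 x
  have hw0 : w 0 = x := hsol0 0 x
  have hwnn : ∀ t i, 0 ≤ w t i := by
    intro t
    rcases le_or_gt 0 t with h | h
    · exact hnn 0 t x h hxK.1
    · set n : ℕ := ⌈-t⌉₊ with hn
      have hnt : -(n:ℝ) ≤ t := by
        have := Nat.le_ceil (-t)
        rw [← hn] at this
        linarith
      obtain ⟨y, hy, hxy⟩ := hxF n
      set r : ℝ := ‖L n y‖⁻¹ with hr
      have hr0 : 0 ≤ r := inv_nonneg.2 (norm_nonneg _)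
      have husol : IsSolution A (fun τ => r • sol (-(n:ℝ)) y τ) :=
        hsmulS r _ (hsolS _ _)
      have hval : (fun τ => r • sol (-(n:ℝ)) y τ) 0 = x := by
        show r • sol (-(n:ℝ)) y 0 = x
        rw [← hxy]
        rfl
      have hagree := hGood.uniq_global hwS husol (t1 := 0)
        (by rw [hw0]; exact hval.symm)
      intro i
      have he := hagree t
      rw [he]
      show 0 ≤ r * sol (-(n:ℝ)) y t i
      exact mul_nonneg hr0 (hnn (-(n:ℝ)) t y hnt hy.1 i)
  have hwne : ∀ t, w t ≠ 0 := by
    intro t hcon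
    have hagree := hGood.uniq_global hwS hzeroS (t1 := t) hcon
    have h0 : w 0 = 0 := hagree 0
    rw [hw0] at h0
    exact hKc0 x hxK h0
  -- final solution
  set v : ℝ → Fin N → ℝ := fun t i => ds i * w t i with hv
  have hvcont : Continuous v :=
    continuous_pi fun i => continuous_const.mul ((continuous_apply i).comp hwS.1)
  refine ⟨v, hvcont, fun t => ⟨⟨fun i hi => ?_, fun i hi => ?_⟩, ?_⟩, fun s t hst => ?_⟩
  · have e : ds i = 1 := if_pos hi
    show 0 ≤ ds i * w t i
    rw [e, one_mul]
    exact hwnn t i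
  · have e : ds i = -1 := if_neg (not_lt.2 hi)
    show ds i * w t i ≤ 0
    rw [e, neg_one_mul]
    exact neg_nonpos.2 (hwnn t i)
  · intro hcon
    apply hwne t
    funext i
    have h1 : ds i * w t i = 0 := congrFun hcon i
    rcases mul_eq_zero.1 h1 with h | h
    · exact absurd h (hds0 i)
    · exact h
  · have hInt1 := hGood.intInt hwS.1 s t
    have hInt2 : IntervalIntegrable (fun τ => (B (θ τ ω)).mulVec (v τ)) volume s t :=
      hGoodB.intInt hvcont s t
    funext i
    have h1 : w t i = w s i + ∫ τ in s..t, (A τ).mulVec (w τ) i := by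
      rw [hwS.2 s t, Pi.add_apply, intervalIntegral_apply hInt1 i]
    show ds i * w t i = (v s + ∫ τ in s..t, (B (θ τ ω)).mulVec (v τ)) i
    rw [Pi.add_apply, intervalIntegral_apply hInt2 i, h1, mul_add]
    congr 1
    rw [← intervalIntegral.integral_const_mul]
    refine intervalIntegral.integral_congr fun τ _ => ?_
    have hA_e : (A τ).mulVec (w τ) i = ∑ j, (ds i * B (θ τ ω) i j * ds j) * w τ j := rfl
    have hB_e : (B (θ τ ω)).mulVec (v τ) i = ∑ j, B (θ τ ω) i j * (ds j * w τ j) := rfl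
    rw [hA_e, hB_e, Finset.mul_sum]
    refine Finset.sum_congr rfl fun j _ => ?_
    rw [show ds i * (ds i * B (θ τ ω) i j * ds j * w τ j)
        = (ds i * ds i) * (B (θ τ ω) i j * (ds j * w τ j)) from by ring, hds2 i, one_mul]
end ODE
end
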